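/- arXiv:1203.3731 — 8 statements merged into one kernel-verified Lean document; each statement's English description precedes it below -/
import Mathlib

section
/- For all nonnegative integers n, i, k: C(n,i)*C(n+i,i)*C(n,k)*C(n+k,k) = sum over j of C(k+i,i)*C(k,j-i)*C(j,k)*C(n,j)*C(n+j,j), where C denotes the binomial coefficient and the sum ranges over all j (nonzero terms have i ≤ j ≤ i+k). -/
open Finset

private def TT (n i k j : ℕ) : ℕ :=
  if i ≤ j then k.choose (j - i) * j.choose k * n.choose j * (n + j).choose j else 0

-- (m+1-r) * C(m+1, r) = (m+1) * C(m, r)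
private lemma H1 (m r : ℕ) : (m + 1 - r) * (m + 1).choose r = (m + 1) * m.choose r := by
  calc (m + 1 - r) * (m + 1).choose r = (m + 1).choose r * (m + 1 - r) := mul_comm _ _
    _ = (m + 1).choose (r + 1) * (r + 1) := (Nat.choose_succ_right_eq _ _).symm
    _ = (m + 1) * m.choose r := (Nat.add_one_mul_choose_eq m r).symm

-- (m+1) * C(m+r+1, r) = (m+r+1) * C(m+r, r)
private lemma H2 (m r : ℕ) : (m + 1) * (m + r + 1).choose r = (m + r + 1) * (m + r).choose r := by
  have h1 := Nat.add_one_mul_choose_eq (m + r) r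
  have h2 := Nat.choose_succ_right_eq (m + r + 1) r
  have h3 : m + r + 1 - r = m + 1 := by omega
  rw [h3] at h2
  calc (m + 1) * (m + r + 1).choose r = (m + r + 1).choose r * (m + 1) := mul_comm _ _
    _ = (m + r + 1).choose (r + 1) * (r + 1) := h2.symm
    _ = (m + r + 1) * (m + r).choose r := h1.symm

private lemma P1 (n i k j : ℕ) :
    ((n : ℚ) + 1 - j) * (TT (n + 1) i k j : ℕ) = ((n : ℚ) + 1 + j) * (TT n i k j : ℕ) := by
  rcases le_or_gt j (n + 1) with hj | hj
  · have q1 : ((n : ℚ) + 1 - j) * ((n + 1).choose j : ℕ) = ((n : ℚ) + 1) * (n.choose j : ℕ) := by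
      have h := H1 n j
      have hc : ((n + 1 - j : ℕ) : ℚ) = (n : ℚ) + 1 - j := by
        rw [Nat.cast_sub hj]; push_cast; ring
      calc ((n : ℚ) + 1 - j) * ((n + 1).choose j : ℕ)
          = ((n + 1 - j : ℕ) : ℚ) * ((n + 1).choose j : ℕ) := by rw [hc]
        _ = (((n + 1 - j) * (n + 1).choose j : ℕ) : ℚ) := by push_cast; ring
        _ = (((n + 1) * n.choose j : ℕ) : ℚ) := by rw [h]
        _ = ((n : ℚ) + 1) * (n.choose j : ℕ) := by push_cast; ring
    have q2 : ((n : ℚ) + 1) * ((n + 1 + j).choose j : ℕ) = ((n : ℚ) + 1 + j) * ((n + j).choose j : ℕ) := by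
      have h := H2 n j
      have hq : (((n + 1) * (n + j + 1).choose j : ℕ) : ℚ) = (((n + j + 1) * (n + j).choose j : ℕ) : ℚ) := by
        exact congrArg (Nat.cast : ℕ → ℚ) h
      push_cast at hq
      rw [show n + 1 + j = n + j + 1 by ring]
      linear_combination hq
    unfold TT
    split
    · push_cast
      apply mul_left_cancel₀ (show ((n : ℚ) + 1) ≠ 0 by positivity)
      linear_combination ((n : ℚ) + 1 + j) * (k.choose (j - i) : ℚ) * (j.choose k : ℚ) * ((n + j).choose j : ℚ) * q1 +
        ((n : ℚ) + 1 - j) * (k.choose (j - i) : ℚ) * (j.choose k : ℚ) * (((n + 1).choose j : ℚ)) * q2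
    · simp
  · have h1 : (n + 1).choose j = 0 := Nat.choose_eq_zero_of_lt hj
    have h2 : n.choose j = 0 := Nat.choose_eq_zero_of_lt (by omega)
    unfold TT
    split <;> simp [h1, h2]

private lemma TT_zero_of_lt_i {n i k j : ℕ} (h : j < i) : TT n i k j = 0 := by
  unfold TT; rw [if_neg (by omega)]

private lemma castEq {a b : ℕ} (h : a = b) : (a : ℚ) = (b : ℚ) := by exact_mod_cast h

private lemma P2 (n i k j : ℕ) :
    ((n : ℚ) + j + 1) * ((i : ℚ) + k - j) * ((n : ℚ) - j) * (TT n i k j : ℕ) =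
    ((j : ℚ) + 1 - i) * ((j : ℚ) + 1 - k) * ((j : ℚ) + 1) * (TT n i k (j + 1) : ℕ) := by
  by_cases hij : i ≤ j
  case neg =>
    rw [TT_zero_of_lt_i (by omega)]
    rcases eq_or_lt_of_le (show j + 1 ≤ i by omega) with h | h
    · rw [show ((j : ℚ) + 1 - i) = 0 by rw [← h]; push_cast; ring]; ring
    · rw [TT_zero_of_lt_i h]; push_cast; ring
  by_cases hkj : k ≤ j
  case neg =>
    have hL : j.choose k = 0 := Nat.choose_eq_zero_of_lt (by omega)
    have h0 : (TT n i k j : ℕ) = 0 := by unfold TT; rw [if_pos hij, hL]; ring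
    rw [h0]
    rcases eq_or_lt_of_le (show j + 1 ≤ k by omega) with h | h
    · rw [show ((j : ℚ) + 1 - k) = 0 by rw [← h]; push_cast; ring]; ring
    · have hR : (j+1).choose k = 0 := Nat.choose_eq_zero_of_lt h
      have h1 : (TT n i k (j+1) : ℕ) = 0 := by unfold TT; rw [if_pos (by omega), hR]; ring
      rw [h1]; push_cast; ring
  by_cases hik : j < i + k
  case neg =>
    push_neg at hik
    have hR : k.choose (j + 1 - i) = 0 := Nat.choose_eq_zero_of_lt (by omega)
    have h1 : (TT n i k (j+1) : ℕ) = 0 := by unfold TT; rw [if_pos (by omega), hR]; ring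
    rw [h1]
    rcases eq_or_lt_of_le hik with h | h
    · have hj : ((j : ℕ) : ℚ) = (i : ℚ) + k := by exact_mod_cast h.symm
      rw [show ((i : ℚ) + k - j) = 0 by rw [hj]; ring]; ring
    · have hL : k.choose (j - i) = 0 := Nat.choose_eq_zero_of_lt (by omega)
      have h0 : (TT n i k j : ℕ) = 0 := by unfold TT; rw [if_pos hij, hL]; ring
      rw [h0]; ring
  by_cases hjn : j < n
  case neg =>
    push_neg at hjn
    have hR : n.choose (j + 1) = 0 := Nat.choose_eq_zero_of_lt (by omega)
    have h1 : (TT n i k (j+1) : ℕ) = 0 := by unfold TT; rw [if_pos (by omega), hR]; ring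
    rw [h1]
    rcases eq_or_lt_of_le hjn with h | h
    · rw [show ((n : ℚ) - j) = 0 by rw [h]; push_cast; ring]; ring
    · have hL : n.choose j = 0 := Nat.choose_eq_zero_of_lt h
      have h0 : (TT n i k j : ℕ) = 0 := by unfold TT; rw [if_pos hij, hL]; ring
      rw [h0]; ring
  -- main case: i ≤ j, k ≤ j, j + 1 ≤ i + k, j + 1 ≤ n
  · unfold TT
    rw [if_pos hij, if_pos (by omega : i ≤ j + 1)]
    rw [show j + 1 - i = (j - i) + 1 by omega, show n + (j + 1) = n + j + 1 by ring]
    -- q1 : C(k, (j-i)+1) * ((j-i)+1) = C(k, j-i) * (k - (j-i))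
    have q1 : (k.choose ((j - i) + 1) : ℚ) * ((j : ℚ) - i + 1) = (k.choose (j - i) : ℚ) * ((i : ℚ) + k - j) := by
      have h := castEq (Nat.choose_succ_right_eq k (j - i))
      push_cast at h
      rw [Nat.cast_sub hij, Nat.cast_sub (show j - i ≤ k by omega)] at h
      rw [Nat.cast_sub hij] at h
      linear_combination h
    -- q2 : ((j+1) - k) * C(j+1, k) = (j+1) * C(j, k)
    have q2 : ((j : ℚ) + 1 - k) * ((j + 1).choose k : ℚ) = ((j : ℚ) + 1) * (j.choose k : ℚ) := by
      have h := castEq (H1 j k)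
      push_cast [Nat.cast_sub (show k ≤ j + 1 by omega)] at h
      linear_combination h
    -- q3 : C(n, j+1) * (j+1) = C(n, j) * (n - j)
    have q3 : ((n.choose (j + 1)) : ℚ) * ((j : ℚ) + 1) = (n.choose j : ℚ) * ((n : ℚ) - j) := by
      have h := castEq (Nat.choose_succ_right_eq n j)
      push_cast [Nat.cast_sub (show j ≤ n by omega)] at h
      linear_combination h
    -- q4 : (n+j+1) * C(n+j, j) = C(n+j+1, j+1) * (j+1)
    have q4 : ((n : ℚ) + j + 1) * ((n + j).choose j : ℚ) = ((n + j + 1).choose (j + 1) : ℚ) * ((j : ℚ) + 1) := by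
      have h := castEq (Nat.add_one_mul_choose_eq (n + j) j)
      push_cast at h
      linear_combination h
    push_cast
    apply mul_left_cancel₀ (show ((j : ℚ) + 1) ≠ 0 by positivity)
    linear_combination
      (-(((j:ℚ)+1) * ((n:ℚ)-j) * ((n:ℚ)+j+1) * (j.choose k : ℚ) * (n.choose j : ℚ) * ((n+j).choose j : ℚ))) * q1 +
      (-(((j:ℚ)-i+1) * ((n:ℚ)-j) * ((n:ℚ)+j+1) * (k.choose (j-i+1) : ℚ) * (n.choose j : ℚ) * ((n+j).choose j : ℚ))) * q2 +
      (-(((j:ℚ)-i+1) * ((j:ℚ)+1-k) * ((n:ℚ)+j+1) * (k.choose (j-i+1) : ℚ) * ((j+1).choose k : ℚ) * ((n+j).choose j : ℚ))) * q3 +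
      (((j:ℚ)-i+1) * ((j:ℚ)+1-k) * ((j:ℚ)+1) * (k.choose (j-i+1) : ℚ) * ((j+1).choose k : ℚ) * (n.choose (j+1) : ℚ)) * q4

private lemma P3 (n i k : ℕ) (hi : i ≤ n) (hk : k ≤ n) :
    ((n : ℚ) + 1 - i) * ((n : ℚ) + 1 - k) * (TT (n + 1) i k (n + 1) : ℕ) =
    2 * (2 * (n : ℚ) + 1) * ((i : ℚ) + k - n) * (TT n i k n : ℕ) := by
  rcases lt_trichotomy n (i + k) with hn | hn | hn
  · -- main case : n < i + k
    unfold TT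
    rw [if_pos (by omega : i ≤ n + 1), if_pos hi, Nat.choose_self, Nat.choose_self]
    rw [show n + 1 - i = (n - i) + 1 by omega]
    have e1 : (n + 1) + (n + 1) = 2 * (n + 1) := by ring
    have e2 : n + n = 2 * n := by ring
    rw [e1, e2]
    have q1 : (k.choose ((n - i) + 1) : ℚ) * ((n : ℚ) - i + 1) = (k.choose (n - i) : ℚ) * ((i : ℚ) + k - n) := by
      have h := castEq (Nat.choose_succ_right_eq k (n - i))
      push_cast at h
      rw [Nat.cast_sub hi, Nat.cast_sub (show n - i ≤ k by omega)] at h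
      rw [Nat.cast_sub hi] at h
      linear_combination h
    have q2 : ((n : ℚ) + 1 - k) * ((n + 1).choose k : ℚ) = ((n : ℚ) + 1) * (n.choose k : ℚ) := by
      have h := castEq (H1 n k)
      push_cast [Nat.cast_sub (show k ≤ n + 1 by omega)] at h
      linear_combination h
    have q3 : ((n : ℚ) + 1) * ((2 * (n + 1)).choose (n + 1) : ℚ) = 2 * (2 * (n : ℚ) + 1) * ((2 * n).choose n : ℚ) := by
      have h := castEq (Nat.succ_mul_centralBinom_succ n)
      unfold Nat.centralBinom at h
      push_cast at h
      linear_combination h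
    push_cast
    apply mul_left_cancel₀ (show ((n : ℚ) + 1) ≠ 0 by positivity)
    linear_combination
      (((n:ℚ)+1-k) * ((n+1).choose k : ℚ) * ((n:ℚ)+1) * ((2*(n+1)).choose (n+1) : ℚ)) * q1 +
      (((i:ℚ)+k-n) * (k.choose (n-i) : ℚ) * ((n:ℚ)+1) * ((2*(n+1)).choose (n+1) : ℚ)) * q2 +
      (((i:ℚ)+k-n) * ((n:ℚ)+1) * (k.choose (n-i) : ℚ) * (n.choose k : ℚ)) * q3
  · -- n = i + k : both sides vanish
    have hL : k.choose (n + 1 - i) = 0 := Nat.choose_eq_zero_of_lt (by omega)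
    have h0 : (TT (n+1) i k (n+1) : ℕ) = 0 := by unfold TT; rw [if_pos (by omega), hL]; ring
    have hc : ((i : ℚ) + k - n) = 0 := by
      have h := castEq hn
      push_cast at h
      linear_combination -h
    rw [h0, hc]; ring
  · -- n > i + k : both sides vanish
    have hL : k.choose (n + 1 - i) = 0 := Nat.choose_eq_zero_of_lt (by omega)
    have hR : k.choose (n - i) = 0 := Nat.choose_eq_zero_of_lt (by omega)
    have h0 : (TT (n+1) i k (n+1) : ℕ) = 0 := by unfold TT; rw [if_pos (by omega), hL]; ring
    have h1 : (TT n i k n : ℕ) = 0 := by unfold TT; rw [if_pos hi, hR]; ring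
    rw [h0, h1]; ring

private lemma Rrec (n i k : ℕ) (hi : i ≤ n) (hk : k ≤ n) :
    ((n : ℚ) + 1 - i) * ((n : ℚ) + 1 - k) *
      (((n + 1 + i).choose (i + k) * (n + 1 + k).choose k * (n + 1).choose i : ℕ) : ℚ) =
    ((n : ℚ) + 1 + i) * ((n : ℚ) + 1 + k) *
      (((n + i).choose (i + k) * (n + k).choose k * n.choose i : ℕ) : ℚ) := by
  rw [show n + 1 + i = n + i + 1 by ring, show n + 1 + k = n + k + 1 by ring]
  have r1 : ((n : ℚ) + 1 - k) * ((n + i + 1).choose (i + k) : ℚ) = ((n : ℚ) + i + 1) * ((n + i).choose (i + k) : ℚ) := by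
    have h := castEq (H1 (n + i) (i + k))
    push_cast [Nat.cast_sub (show i + k ≤ n + i + 1 by omega)] at h
    linear_combination h
  have r2 : ((n : ℚ) + 1) * ((n + k + 1).choose k : ℚ) = ((n : ℚ) + k + 1) * ((n + k).choose k : ℚ) := by
    have h := castEq (H2 n k)
    push_cast at h
    linear_combination h
  have r3 : ((n : ℚ) + 1 - i) * ((n + 1).choose i : ℚ) = ((n : ℚ) + 1) * (n.choose i : ℚ) := by
    have h := castEq (H1 n i)
    push_cast [Nat.cast_sub (show i ≤ n + 1 by omega)] at h
    linear_combination h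
  push_cast
  apply mul_left_cancel₀ (show ((n : ℚ) + 1) ≠ 0 by positivity)
  linear_combination
    (((n:ℚ)+1) * ((n + k + 1).choose k : ℚ) * ((n:ℚ)+1-i) * (((n+1).choose i : ℚ))) * r1 +
    (((n:ℚ)+i+1) * ((n + i).choose (i+k) : ℚ) * ((n:ℚ)+1-i) * (((n+1).choose i : ℚ))) * r2 +
    (((n:ℚ)+i+1) * ((n + i).choose (i+k) : ℚ) * ((n:ℚ)+k+1) * ((n + k).choose k : ℚ)) * r3

private lemma saal (i k : ℕ) : ∀ n : ℕ,
    (∑ j ∈ Finset.range (n + 1), TT n i k j) =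
      (n + i).choose (i + k) * (n + k).choose k * n.choose i := by
  intro n
  induction n with
  | zero =>
    simp only [Nat.zero_add, Finset.sum_range_one]
    rcases Nat.eq_zero_or_pos i with rfl | hi
    · show TT 0 0 k 0 = _
      unfold TT
      norm_num
    · unfold TT
      rw [if_neg (by omega)]
      simp [Nat.choose_eq_zero_of_lt hi]
  | succ n ih =>
    by_cases hmain : i ≤ n ∧ k ≤ n
    · obtain ⟨hi, hk⟩ := hmain
      have hTtop : TT n i k (n + 1) = 0 := by
        unfold TT
        split
        · rw [Nat.choose_eq_zero_of_lt (Nat.lt_succ_self n)]; ring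
        · rfl
      have hA : ((n : ℚ) + 1 - i) * ((n : ℚ) + 1 - k) ≠ 0 := by
        have h1 : (i : ℚ) ≤ n := by exact_mod_cast hi
        have h2 : (k : ℚ) ≤ n := by exact_mod_cast hk
        exact mul_ne_zero (ne_of_gt (by linarith)) (ne_of_gt (by linarith))
      -- telescoping recurrence for the sums
      have hLq : ((n : ℚ) + 1 - i) * ((n : ℚ) + 1 - k) * ∑ j ∈ Finset.range (n + 2), (TT (n + 1) i k j : ℚ) =
          ((n : ℚ) + 1 + i) * ((n : ℚ) + 1 + k) * ∑ j ∈ Finset.range (n + 1), (TT n i k j : ℚ) := by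
        set g : ℕ → ℚ := fun m => match m with
          | 0 => 0
          | (j + 1) => -2 * ((n : ℚ) + j + 1) * ((i : ℚ) + k - j) * (TT n i k j : ℕ)
          with hg
        have tel := Finset.sum_range_sub g (n + 2)
        have hgtop : g (n + 2) = 0 := by
          show -2 * ((n : ℚ) + (n + 1 : ℕ) + 1) * ((i : ℚ) + k - (n + 1 : ℕ)) * (TT n i k (n + 1) : ℕ) = 0
          rw [hTtop]; push_cast; ring
        have hg0 : g 0 = 0 := rfl
        have hE : ∀ j ∈ Finset.range (n + 2),
            ((n : ℚ) + 1 - i) * ((n : ℚ) + 1 - k) * (TT (n + 1) i k j : ℕ) -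
              ((n : ℚ) + 1 + i) * ((n : ℚ) + 1 + k) * (TT n i k j : ℕ) = g (j + 1) - g j := by
          intro j hj
          simp only [Finset.mem_range] at hj
          rcases j with _ | j
          · have hg1 : g 1 = -2 * ((n : ℚ) + (0 : ℕ) + 1) * ((i : ℚ) + k - (0 : ℕ)) * (TT n i k 0 : ℕ) := rfl
            rw [hg1, hg0]
            rcases Nat.eq_zero_or_pos i with rfl | hipos
            · rcases Nat.eq_zero_or_pos k with rfl | hkpos
              · unfold TT; norm_num
              · have h1 : TT (n + 1) 0 k 0 = 0 := by
                  unfold TT; rw [if_pos (le_refl 0), Nat.choose_eq_zero_of_lt hkpos]; ring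
                have h2 : TT n 0 k 0 = 0 := by
                  unfold TT; rw [if_pos (le_refl 0), Nat.choose_eq_zero_of_lt hkpos]; ring
                rw [h1, h2]; push_cast; ring
            · rw [TT_zero_of_lt_i hipos, TT_zero_of_lt_i hipos]; push_cast; ring
          · have hgl : g (j + 2) = -2 * ((n : ℚ) + (j + 1 : ℕ) + 1) * ((i : ℚ) + k - (j + 1 : ℕ)) * (TT n i k (j + 1) : ℕ) := rfl
            have hgr : g (j + 1) = -2 * ((n : ℚ) + (j : ℕ) + 1) * ((i : ℚ) + k - (j : ℕ)) * (TT n i k j : ℕ) := rfl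
            rw [hgl, hgr]
            by_cases hjn : j = n
            · subst hjn
              rw [hTtop]
              have h3 := P3 _ i k hi hk
              push_cast
              linear_combination h3
            · have hnj : ((n : ℚ) - (j : ℚ)) ≠ 0 := by
                have : (j : ℚ) ≠ (n : ℚ) := by exact_mod_cast hjn
                intro hzero
                exact this (by linarith)
              apply mul_left_cancel₀ hnj
              have h1 := P1 n i k (j + 1)
              have h2 := P2 n i k j
              push_cast at h1 h2 ⊢
              linear_combination ((n : ℚ) + 1 - i) * ((n : ℚ) + 1 - k) * h1 - 2 * h2
        have hsum := Finset.sum_congr rfl hE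
        rw [tel, hgtop, hg0, sub_zero, Finset.sum_sub_distrib, ← Finset.mul_sum, ← Finset.mul_sum] at hsum
        have hsplit : ∑ j ∈ Finset.range (n + 2), (TT n i k j : ℚ) =
            ∑ j ∈ Finset.range (n + 1), (TT n i k j : ℚ) := by
          rw [Finset.sum_range_succ, hTtop]; push_cast; ring
        rw [hsplit] at hsum
        linarith [hsum]
      have hR := Rrec n i k hi hk
      have ihq : ∑ j ∈ Finset.range (n + 1), (TT n i k j : ℚ) =
          ((n + i).choose (i + k) : ℚ) * ((n + k).choose k : ℚ) * (n.choose i : ℚ) := by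
        have := castEq ih
        push_cast at this
        exact this
      have hfin : ((∑ j ∈ Finset.range (n + 2), TT (n + 1) i k j : ℕ) : ℚ) =
          (((n + 1 + i).choose (i + k) * (n + 1 + k).choose k * (n + 1).choose i : ℕ) : ℚ) := by
        apply mul_left_cancel₀ hA
        push_cast at hR ⊢
        push_cast at hLq
        rw [hLq, ihq]
        linear_combination -hR
      exact_mod_cast hfin
    · push_neg at hmain
      by_cases h1 : n + 1 < i
      · -- every term has failing guard
        rw [Finset.sum_eq_zero (fun j hj => by
          simp only [Finset.mem_range] at hj
          exact TT_zero_of_lt_i (by omega))]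
        rw [Nat.choose_eq_zero_of_lt h1, Nat.mul_zero]
      · by_cases h2 : n + 1 < k
        · -- every term has C(j, k) = 0
          rw [Finset.sum_eq_zero (fun j hj => by
            simp only [Finset.mem_range] at hj
            unfold TT
            split
            · rw [Nat.choose_eq_zero_of_lt (show j < k by omega)]; ring
            · rfl)]
          rw [Nat.choose_eq_zero_of_lt (show n + 1 + i < i + k by omega)]
          ring
        · by_cases hk1 : k = n + 1
          · -- k = n + 1 : single term j = n + 1
            subst hk1
            rw [Finset.sum_eq_single (n + 1)
              (fun j hj hne => by
                simp only [Finset.mem_range] at hj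
                unfold TT
                split
                · rw [Nat.choose_eq_zero_of_lt (show j < n + 1 by omega)]; ring
                · rfl)
              (fun h => absurd (Finset.self_mem_range_succ (n + 1)) h)]
            unfold TT
            rw [if_pos (show i ≤ n + 1 by omega), Nat.choose_self,
              Nat.choose_symm (show i ≤ n + 1 by omega)]
            rw [show i + (n + 1) = n + 1 + i by omega, Nat.choose_self]
            ring
          · -- i = n + 1, k ≤ n : single term j = n + 1
            have hi1 : i = n + 1 := by omega
            have hkn : k ≤ n := by omega
            subst hi1
            rw [Finset.sum_eq_single (n + 1)
              (fun j hj hne => by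
                simp only [Finset.mem_range] at hj
                exact TT_zero_of_lt_i (by omega))
              (fun h => absurd (Finset.self_mem_range_succ (n + 1)) h)]
            unfold TT
            rw [if_pos (le_refl (n + 1)), Nat.sub_self, Nat.choose_zero_right, Nat.choose_self]
            -- goal : 1 * (n+1).choose k * 1 * (n+1+(n+1)).choose (n+1)
            --      = (n+1+(n+1)).choose (n+1+k) * (n+1+k).choose k * 1
            have c1 := Nat.choose_mul (n := n + 1 + (n + 1))
              (show k ≤ n + 1 + k by omega)
            have c2 := Nat.choose_mul (n := n + 1 + (n + 1))
              (show k ≤ n + 1 by omega)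
            rw [show n + 1 + (n + 1) - k = n + 1 + (n + 1 - k) by omega] at c1 c2
            rw [show n + 1 + k - k = n + 1 by omega] at c1
            have c3 := Nat.choose_symm (show n + 1 ≤ n + 1 + (n + 1 - k) by omega)
            rw [show n + 1 + (n + 1 - k) - (n + 1) = n + 1 - k by omega] at c3
            rw [c3] at c2
            -- c1 : C(2n+2, n+1+k) * C(n+1+k, k) = C(2n+2, k) * C(n+1+(n+1-k), n+1)
            -- c2 : C(2n+2, n+1) * C(n+1, k) = C(2n+2, k) * C(n+1+(n+1-k), n+1)
            have : (n + 1 + (n + 1)).choose (n + 1 + k) * (n + 1 + k).choose k =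
                (n + 1 + (n + 1)).choose (n + 1) * (n + 1).choose k := by rw [c1, c2]
            rw [this]
            ring

theorem key_identity (n i k : ℕ) :
    n.choose i * (n + i).choose i * n.choose k * (n + k).choose k =
      ∑ j ∈ Finset.range (n + 1),
        if i ≤ j then
          (k + i).choose i * k.choose (j - i) * j.choose k *
            n.choose j * (n + j).choose j
        else 0 := by
  have hsummand : ∀ j, (if i ≤ j then (k + i).choose i * k.choose (j - i) * j.choose k *
      n.choose j * (n + j).choose j else 0) = (k + i).choose i * TT n i k j := by
    intro j
    unfold TT
    split
    · ring
    · rw [Nat.mul_zero]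
  rw [Finset.sum_congr rfl (fun j _ => hsummand j), ← Finset.mul_sum, saal]
  have key : (n + i).choose i * n.choose k = (k + i).choose i * (n + i).choose (i + k) := by
    by_cases hk : k ≤ n
    · have h := Nat.choose_mul (n := n + i) (show i ≤ i + k by omega)
      rw [show n + i - i = n by omega, show i + k - i = k by omega] at h
      rw [show (k + i).choose i = (i + k).choose i by rw [Nat.add_comm k i]]
      rw [← h]; ring
    · have h1 : n.choose k = 0 := Nat.choose_eq_zero_of_lt (by omega)
      have h2 : (n + i).choose (i + k) = 0 := Nat.choose_eq_zero_of_lt (by omega)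
      rw [h1, h2]; ring
  calc n.choose i * (n + i).choose i * n.choose k * (n + k).choose k
      = ((n + i).choose i * n.choose k) * (n.choose i * (n + k).choose k) := by ring
    _ = ((k + i).choose i * (n + i).choose (i + k)) * (n.choose i * (n + k).choose k) := by rw [key]
    _ = (k + i).choose i * ((n + i).choose (i + k) * (n + k).choose k * n.choose i) := by ring
end

section
/- Define integers a(r,k,j) recursively by a(1,k,k) = 1, a(1,k,j) = 0 for j ≠ k, and a(r+1,k,j) = sum over i of C(k+i,i)*C(k,j-i)*C(j,k)*a(r,k,i). Then for all r ≥ 1, k ≥ 0, and n ≥ 0: C(n,k)^r * C(n+k,k)^r = sum over j of a(r,k,j)*C(n,j)*C(n+j,j). -/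
open Finset

private lemma hl1 (k i : ℕ) :
    ((k : ℤ) + i + 1) * (k + i).choose i = ((k + i + 1).choose (i + 1) : ℤ) * ((i : ℤ) + 1) := by
  have h := Nat.add_one_mul_choose_eq (k + i) i
  exact_mod_cast h

private lemma hl2 (j k : ℕ) :
    ((j : ℤ) + 1 - k) * ((j + 1).choose k : ℤ) = ((j : ℤ) + 1) * (j.choose k : ℤ) := by
  cases k with
  | zero => simp
  | succ m =>
    have hp : (((j + 1).choose (m + 1) : ℕ) : ℤ) = (j.choose m : ℤ) + (j.choose (m + 1) : ℤ) := by
      exact_mod_cast congrArg (Nat.cast : ℕ → ℤ) (Nat.choose_succ_succ j m)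
    have hm : ((j : ℤ) + 1) * (j.choose m : ℤ) = ((j + 1).choose (m + 1) : ℤ) * ((m : ℤ) + 1) := by
      have h := Nat.add_one_mul_choose_eq j m
      exact_mod_cast h
    push_cast
    linear_combination ((j : ℤ) + 1) * hp + hm

private lemma hl3 (k d : ℕ) :
    ((k : ℤ) - d) * (k.choose d : ℤ) = ((d : ℤ) + 1) * (k.choose (d + 1) : ℤ) := by
  rcases le_or_gt d k with h | h
  · have h2 := Nat.choose_succ_right_eq k d
    zify [h] at h2
    linear_combination -h2
  · have e1 : k.choose d = 0 := Nat.choose_eq_zero_of_lt h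
    have e2 : k.choose (d + 1) = 0 := Nat.choose_eq_zero_of_lt (by omega)
    simp [e1, e2]

private lemma hl4 (n m : ℕ) (h : m ≤ n) :
    ((n : ℤ) - m) * ((n : ℤ) + m + 1) * ((n.choose m : ℤ) * ((n + m).choose m : ℤ))
      = ((m : ℤ) + 1) ^ 2 * ((n.choose (m + 1) : ℤ) * ((n + m + 1).choose (m + 1) : ℤ)) := by
  have f1 : ((n : ℤ) - m) * (n.choose m : ℤ) = ((m : ℤ) + 1) * (n.choose (m + 1) : ℤ) := by
    have h2 := Nat.choose_succ_right_eq n m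
    zify [h] at h2
    linear_combination -h2
  have f2 : ((n : ℤ) + m + 1) * ((n + m).choose m : ℤ)
      = ((n + m + 1).choose (m + 1) : ℤ) * ((m : ℤ) + 1) := hl1 n m
  linear_combination (((n : ℤ) + m + 1) * ((n + m).choose m : ℤ)) * f1
    + (((m : ℤ) + 1) * ((n.choose (m + 1) : ℤ))) * f2

private lemma key (k n : ℕ) : ∀ i : ℕ, i ≤ n →
    ∑ j ∈ Finset.Ico i (n + 1),
      ((k + i).choose i * k.choose (j - i) * j.choose k : ℤ) *
        ((n.choose j : ℤ) * ((n + j).choose j : ℤ)) =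
    ((n.choose k : ℤ) * ((n + k).choose k : ℤ)) *
      ((n.choose i : ℤ) * ((n + i).choose i : ℤ)) := by
  intro i
  induction i with
  | zero =>
    intro _
    simp only [Nat.add_zero, Nat.choose_zero_right, Nat.sub_zero, Nat.cast_one, one_mul,
      Finset.range_eq_Ico]
    rcases le_or_gt k n with hkn | hkn
    · rw [Finset.sum_eq_single k]
      · simp [Nat.choose_self]
      · intro j hj hjk
        rcases lt_or_gt_of_ne hjk with hlt | hgt
        · simp [Nat.choose_eq_zero_of_lt hlt]
        · simp [Nat.choose_eq_zero_of_lt hgt]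
      · intro hk
        exfalso
        exact hk (Finset.mem_Ico.mpr ⟨Nat.zero_le _, by omega⟩)
    · rw [Finset.sum_eq_zero, Nat.choose_eq_zero_of_lt hkn]
      · simp
      · intro j hj
        have hj' : j < k := by
          have := (Finset.mem_Ico.mp hj).2; omega
        simp [Nat.choose_eq_zero_of_lt hj']
  | succ i ih =>
    intro h
    have hin : i ≤ n := by omega
    have IH := ih hin
    have hne : (((i : ℤ) + 1) ^ 2) ≠ 0 := by positivity
    apply mul_left_cancel₀ hne
    have step1 : ((i : ℤ) + 1) ^ 2 * (((n.choose k : ℤ) * ((n + k).choose k : ℤ)) *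
        ((n.choose (i + 1) : ℤ) * ((n + (i + 1)).choose (i + 1) : ℤ)))
        = ((n : ℤ) - i) * ((n : ℤ) + i + 1) * (((n.choose k : ℤ) * ((n + k).choose k : ℤ)) *
        ((n.choose i : ℤ) * ((n + i).choose i : ℤ))) := by
      have h4 := hl4 n i hin
      rw [show n + (i + 1) = n + i + 1 from by omega]
      linear_combination ((n.choose k : ℤ) * ((n + k).choose k : ℤ)) * h4.symm
    rw [step1, ← IH, Finset.mul_sum, Finset.mul_sum]
    have expand : ∀ j ∈ Finset.Ico i (n + 1),
        ((n : ℤ) - i) * ((n : ℤ) + i + 1) *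
          (((k + i).choose i * k.choose (j - i) * j.choose k : ℤ) *
            ((n.choose j : ℤ) * ((n + j).choose j : ℤ)))
        = ((k + i).choose i * k.choose (j - i) * j.choose k : ℤ) *
            (((j : ℤ) + 1) ^ 2 * ((n.choose (j + 1) : ℤ) * ((n + j + 1).choose (j + 1) : ℤ)))
          + ((j : ℤ) - i) * ((i : ℤ) + j + 1) *
            (((k + i).choose i * k.choose (j - i) * j.choose k : ℤ) *
              ((n.choose j : ℤ) * ((n + j).choose j : ℤ))) := by
      intro j hj
      have hjn : j ≤ n := by have := (Finset.mem_Ico.mp hj).2; omega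
      have h4 := hl4 n j hjn
      linear_combination ((k + i).choose i * k.choose (j - i) * j.choose k : ℤ) * h4
    rw [Finset.sum_congr rfl expand, Finset.sum_add_distrib]
    rw [Finset.sum_Ico_succ_top hin]
    rw [Finset.sum_eq_sum_Ico_succ_bot (show i < n + 1 from by omega)]
    have htop : ((k + i).choose i * k.choose (n - i) * n.choose k : ℤ) *
        (((n : ℤ) + 1) ^ 2 * ((n.choose (n + 1) : ℤ) * ((n + n + 1).choose (n + 1) : ℤ))) = 0 := by
      simp [Nat.choose_eq_zero_of_lt (Nat.lt_succ_self n)]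
    have hbot : ((i : ℤ) - i) * ((i : ℤ) + i + 1) *
        (((k + i).choose i * k.choose (i - i) * i.choose k : ℤ) *
          ((n.choose i : ℤ) * ((n + i).choose i : ℤ))) = 0 := by
      ring
    rw [htop, hbot, add_zero, zero_add]
    rw [Finset.sum_Ico_eq_sum_range, Finset.sum_Ico_eq_sum_range, Finset.sum_Ico_eq_sum_range]
    rw [show n + 1 - (i + 1) = n - i from by omega]
    rw [← Finset.sum_add_distrib]
    apply Finset.sum_congr rfl
    intro t ht
    have e2 : i + 1 + t - (i + 1) = t := by omega
    have e3 : i + t - i = t := by omega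
    have e4 : i + 1 + t - i = t + 1 := by omega
    have e5 : k + (i + 1) = k + i + 1 := by omega
    have e1 : i + t + 1 = i + 1 + t := by omega
    have e6 : n + (i + t) + 1 = n + (i + 1 + t) := by omega
    rw [e2, e3, e4, e5, e1, e6]
    have hA := hl2 (i + t) k
    rw [e1] at hA
    have hB := hl3 k t
    have hC := hl1 k i
    push_cast at hA hB hC ⊢
    linear_combination
      (((i : ℤ) + t + 1) * ((k + i).choose i : ℤ) * (k.choose t : ℤ) *
        ((n.choose (i + 1 + t) : ℤ) * ((n + (i + 1 + t)).choose (i + 1 + t) : ℤ))) * hA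
      + ((2 * (i : ℤ) + t + 2) * ((k + i).choose i : ℤ) * (((i + 1 + t).choose k : ℤ)) *
        ((n.choose (i + 1 + t) : ℤ) * ((n + (i + 1 + t)).choose (i + 1 + t) : ℤ))) * hB
      - (((i : ℤ) + 1) * (k.choose t : ℤ) * (((i + 1 + t).choose k : ℤ)) *
        ((n.choose (i + 1 + t) : ℤ) * ((n + (i + 1 + t)).choose (i + 1 + t) : ℤ))) * hC

theorem guo_zeng_lemma (a : ℕ → ℕ → ℕ → ℤ)
    (h1 : ∀ k, a 1 k k = 1)
    (h2 : ∀ k j, j ≠ k → a 1 k j = 0)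
    (hrec : ∀ r, 1 ≤ r → ∀ k j, a (r + 1) k j =
      ∑ i ∈ Finset.range (j + 1),
        ((k + i).choose i * k.choose (j - i) * j.choose k : ℤ) * a r k i) :
    ∀ r, 1 ≤ r → ∀ k n : ℕ,
      ((n.choose k : ℤ) * (n + k).choose k) ^ r =
        ∑ j ∈ Finset.range (n + 1),
          a r k j * n.choose j * (n + j).choose j := by
  intro r hr
  induction r, hr using Nat.le_induction with
  | base =>
    intro k n
    rw [pow_one]
    rcases le_or_gt k n with hkn | hkn
    · rw [Finset.sum_eq_single k]
      · rw [h1]; ring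
      · intro j hj hjk
        rw [h2 k j hjk]; ring
      · intro hk
        exfalso
        exact hk (Finset.mem_range.mpr (by omega))
    · rw [Finset.sum_eq_zero, Nat.choose_eq_zero_of_lt hkn]
      · simp
      · intro j hj
        have : j ≠ k := by have := Finset.mem_range.mp hj; omega
        rw [h2 k j this]; ring
  | succ r hr IH =>
    intro k n
    rw [pow_succ, IH k n, Finset.sum_mul]
    have term : ∀ i ∈ Finset.range (n + 1),
        a r k i * (n.choose i : ℤ) * ((n + i).choose i : ℤ) *
          ((n.choose k : ℤ) * ((n + k).choose k : ℤ))
        = ∑ j ∈ Finset.Ico i (n + 1),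
            a r k i * (((k + i).choose i * k.choose (j - i) * j.choose k : ℤ) *
              ((n.choose j : ℤ) * ((n + j).choose j : ℤ))) := by
      intro i hi
      have hin : i ≤ n := by have := Finset.mem_range.mp hi; omega
      rw [← Finset.mul_sum, key k n i hin]
      ring
    rw [Finset.sum_congr rfl term, Finset.range_eq_Ico, Finset.sum_Ico_Ico_comm]
    apply Finset.sum_congr rfl
    intro j hj
    rw [show j + 1 = j + 1 from rfl]
    rw [hrec r hr k j, Finset.sum_mul, Finset.sum_mul]
    rw [← Finset.range_eq_Ico]
    apply Finset.sum_congr rfl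
    intro i hi
    ring
end

section
/- For every integer r ≥ 1 and every k ≥ 0, there exist integers a(k,j) (for j with k ≤ j ≤ r*k) such that for all n ≥ 0: C(n,k)^r * C(n+k,k)^r = sum over j from k to r*k of a(k,j)*C(n,j)*C(n+j,j). -/
open Finset

namespace GuoZengAux

/-- `D n m = C(n,m) * C(n+m,m)` as an integer. -/
def D (n m : ℕ) : ℤ := (n.choose m : ℤ) * ((n + m).choose m : ℤ)

/-- connection coefficients -/
def c (j k m : ℕ) : ℤ := (m.choose j : ℤ) * (m.choose k : ℤ) * ((j + k).choose m : ℤ)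

lemma c_eq_zero_of_lt {k m : ℕ} (j : ℕ) (h : m < k) : c j k m = 0 := by
  simp [c, Nat.choose_eq_zero_of_lt h]

lemma c_eq_zero_of_gt {j k m : ℕ} (h : j + k < m) : c j k m = 0 := by
  simp [c, Nat.choose_eq_zero_of_lt h]

lemma step_t (n m : ℕ) :
    ((m : ℤ) + 1) ^ 2 * D n (m + 1) = ((n : ℤ) * (n + 1) - m * (m + 1)) * D n m := by
  rcases lt_or_ge n m with h | h
  · have h1 : n.choose m = 0 := Nat.choose_eq_zero_of_lt h
    have h2 : n.choose (m + 1) = 0 := Nat.choose_eq_zero_of_lt (by omega)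
    simp [D, h1, h2]
  · have h1 : n.choose (m + 1) * (m + 1) = n.choose m * (n - m) := Nat.choose_succ_right_eq n m
    have h2 : (n + m + 1) * (n + m).choose m = (n + m + 1).choose (m + 1) * (m + 1) :=
      Nat.add_one_mul_choose_eq (n + m) m
    have hc : ((n - m : ℕ) : ℤ) = (n : ℤ) - m := by
      push_cast [Nat.cast_sub h]; ring
    have h1' : (n.choose (m + 1) : ℤ) * ((m : ℤ) + 1) = (n.choose m : ℤ) * ((n : ℤ) - m) := by
      rw [← hc]; exact_mod_cast h1
    have h2' : ((n : ℤ) + m + 1) * ((n + m).choose m : ℤ)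
        = ((n + m + 1).choose (m + 1) : ℤ) * ((m : ℤ) + 1) := by exact_mod_cast h2
    have hD : D n (m + 1) = (n.choose (m + 1) : ℤ) * ((n + m + 1).choose (m + 1) : ℤ) := by
      simp [D, show n + (m + 1) = n + m + 1 by ring]
    rw [hD]
    unfold D
    linear_combination ((m : ℤ) + 1) * ((n + m + 1).choose (m + 1) : ℤ) * h1'
      - (n.choose m : ℤ) * ((n : ℤ) - m) * h2'


lemma step_c (j k m : ℕ) :
    ((k : ℤ) + 1) ^ 2 * c j (k + 1) (m + 1)
      = ((m : ℤ) + 1) ^ 2 * c j k m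
        + (((m : ℤ) + 1) * ((m : ℤ) + 2) - (k : ℤ) * ((k : ℤ) + 1)) * c j k (m + 1) := by
  rcases lt_or_ge (m + 1) k with hk | hk
  · have e1 : (m + 1).choose (k + 1) = 0 := Nat.choose_eq_zero_of_lt (by omega)
    have e2 : m.choose k = 0 := Nat.choose_eq_zero_of_lt (by omega)
    have e3 : (m + 1).choose k = 0 := Nat.choose_eq_zero_of_lt (by omega)
    simp [c, e1, e2, e3]
  rcases lt_or_ge (m + 1) j with hj | hj
  · have e1 : (m + 1).choose j = 0 := Nat.choose_eq_zero_of_lt (by omega)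
    have e2 : m.choose j = 0 := Nat.choose_eq_zero_of_lt (by omega)
    simp [c, e1, e2]
  rcases lt_or_ge (j + k) m with hm | hm
  · have e1 : (j + (k + 1)).choose (m + 1) = 0 := Nat.choose_eq_zero_of_lt (by omega)
    have e2 : (j + k).choose m = 0 := Nat.choose_eq_zero_of_lt (by omega)
    have e3 : (j + k).choose (m + 1) = 0 := Nat.choose_eq_zero_of_lt (by omega)
    simp [c, e1, e2, e3]
  -- genuine case : k ≤ m + 1, j ≤ m + 1, m ≤ j + k
  -- cast subtractions
  have ck : ((m + 1 - k : ℕ) : ℤ) = (m : ℤ) + 1 - k := by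
    rw [Nat.cast_sub hk]; push_cast; ring
  have cj : ((m + 1 - j : ℕ) : ℤ) = (m : ℤ) + 1 - j := by
    rw [Nat.cast_sub hj]; push_cast; ring
  have cm : ((j + k - m : ℕ) : ℤ) = (j : ℤ) + k - m := by
    rw [Nat.cast_sub hm]; push_cast; ring
  have h1 : ((m + 1).choose (k + 1) : ℤ) * ((k : ℤ) + 1)
      = ((m + 1).choose k : ℤ) * ((m : ℤ) + 1 - k) := by
    rw [← ck]; exact_mod_cast Nat.choose_succ_right_eq (m + 1) k
  have h2 : ((j : ℤ) + k + 1) * ((j + k).choose m : ℤ)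
      = ((j + k + 1).choose (m + 1) : ℤ) * ((m : ℤ) + 1) := by
    exact_mod_cast Nat.add_one_mul_choose_eq (j + k) m
  have h3 : (m.choose j : ℤ) * ((m : ℤ) + 1)
      = ((m + 1).choose j : ℤ) * ((m : ℤ) + 1 - j) := by
    rw [← cj]; exact_mod_cast Nat.choose_mul_succ_eq m j
  have h4 : ((j + k).choose (m + 1) : ℤ) * ((m : ℤ) + 1)
      = ((j + k).choose m : ℤ) * ((j : ℤ) + k - m) := by
    rw [← cm]; exact_mod_cast Nat.choose_succ_right_eq (j + k) m
  have h5 : (m.choose k : ℤ) * ((m : ℤ) + 1)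
      = ((m + 1).choose k : ℤ) * ((m : ℤ) + 1 - k) := by
    rw [← ck]; exact_mod_cast Nat.choose_mul_succ_eq m k
  have hM : ((m : ℤ) + 1) ≠ 0 := by positivity
  apply mul_right_cancel₀ hM
  unfold c
  have hjk : (j + (k + 1)) = (j + k + 1) := by ring
  rw [hjk]
  linear_combination
    ((k : ℤ) + 1) * ((j : ℤ) + k + 1) * ((m + 1).choose j : ℤ) * ((j + k).choose m : ℤ) * h1
    - ((k : ℤ) + 1) ^ 2 * ((m + 1).choose j : ℤ) * ((m + 1).choose (k + 1) : ℤ) * h2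
    - ((m : ℤ) + 1) ^ 2 * (m.choose k : ℤ) * ((j + k).choose m : ℤ) * h3
    - (((m : ℤ) + 1) * ((m : ℤ) + 2) - (k : ℤ) * ((k : ℤ) + 1)) * ((m + 1).choose j : ℤ)
        * ((m + 1).choose k : ℤ) * h4
    - ((m : ℤ) + 1) * ((m : ℤ) + 1 - j) * ((m + 1).choose j : ℤ) * ((j + k).choose m : ℤ) * h5


lemma prod_formula (k j n : ℕ) :
    D n j * D n k = ∑ m ∈ range (j + k + 1), c j k m * D n m := by
  induction k generalizing j with
  | zero =>
    rw [show D n 0 = 1 by simp [D], mul_one]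
    rw [Finset.sum_eq_single j]
    · simp [c, D]
    · intro m hm hne
      rcases lt_or_ge m j with h | h
      · simp [c, Nat.choose_eq_zero_of_lt h]
      · have : j < m := lt_of_le_of_ne h (Ne.symm hne)
        simp [c, Nat.choose_eq_zero_of_lt this]
    · intro h
      exact absurd (Finset.mem_range.mpr (by omega)) h
  | succ k ih =>
    have hK : ((k : ℤ) + 1) ^ 2 ≠ 0 := by positivity
    apply mul_left_cancel₀ hK
    set S1 : ℤ := ∑ m ∈ range (j + k + 1), c j k m * (((m : ℤ) + 1) ^ 2 * D n (m + 1)) with hS1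
    set S2 : ℤ := ∑ m ∈ range (j + k + 1),
      c j k m * (((m : ℤ) * ((m : ℤ) + 1) - (k : ℤ) * ((k : ℤ) + 1)) * D n m) with hS2
    set S2' : ℤ := ∑ m ∈ range (j + k + 1),
      (((m : ℤ) + 1) * ((m : ℤ) + 2) - (k : ℤ) * ((k : ℤ) + 1)) * c j k (m + 1) * D n (m + 1)
      with hS2'
    have lhs_eq : ((k : ℤ) + 1) ^ 2 * (D n j * D n (k + 1)) = S1 + S2 := by
      have e1 : ((k : ℤ) + 1) ^ 2 * (D n j * D n (k + 1))
          = ((n : ℤ) * (n + 1) - k * (k + 1)) * (D n j * D n k) := by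
        have := step_t n k
        linear_combination D n j * this
      rw [e1, ih j, Finset.mul_sum, hS1, hS2, ← Finset.sum_add_distrib]
      apply Finset.sum_congr rfl
      intro m _
      have := step_t n m
      linear_combination (-(c j k m)) * this
    have rhs_eq : ((k : ℤ) + 1) ^ 2 * ∑ m ∈ range (j + (k + 1) + 1), c j (k + 1) m * D n m
        = S1 + S2' := by
      rw [Finset.mul_sum]
      rw [show j + (k + 1) + 1 = (j + k + 1) + 1 by ring]
      rw [Finset.sum_range_succ'
        (fun m => ((k : ℤ) + 1) ^ 2 * (c j (k + 1) m * D n m)) (j + k + 1)]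
      have h0 : ((k : ℤ) + 1) ^ 2 * (c j (k + 1) 0 * D n 0) = 0 := by
        have : (0 : ℕ).choose (k + 1) = 0 := Nat.choose_eq_zero_of_lt (by omega)
        simp [c, this]
      rw [h0, add_zero, hS1, hS2', ← Finset.sum_add_distrib]
      apply Finset.sum_congr rfl
      intro m _
      have := step_c j k m
      push_cast
      linear_combination D n (m + 1) * this
    have s2_eq : S2 = S2' := by
      rw [hS2, Finset.sum_range_succ'
        (fun m => c j k m * (((m : ℤ) * ((m : ℤ) + 1) - (k : ℤ) * ((k : ℤ) + 1)) * D n m))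
        (j + k)]
      rw [hS2', Finset.sum_range_succ]
      have hlast2 : ((((j + k : ℕ) : ℤ) + 1) * (((j + k : ℕ) : ℤ) + 2)
          - (k : ℤ) * ((k : ℤ) + 1)) * c j k (j + k + 1) * D n (j + k + 1) = 0 := by
        have : (j + k).choose (j + k + 1) = 0 := Nat.choose_eq_zero_of_lt (by omega)
        simp [c, this]
      rw [hlast2, add_zero]
      have h00 : c j k 0 * (((((0 : ℕ) : ℤ)) * (((0 : ℕ) : ℤ) + 1)
          - (k : ℤ) * ((k : ℤ) + 1)) * D n 0) = 0 := by
        rcases Nat.eq_zero_or_pos k with hk0 | hk0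
        · subst hk0; push_cast; ring
        · have : (0 : ℕ).choose k = 0 := Nat.choose_eq_zero_of_lt hk0
          simp [c, this]
      rw [h00, add_zero]
      apply Finset.sum_congr rfl
      intro m _
      push_cast
      ring
    rw [lhs_eq, rhs_eq, s2_eq]


lemma helper (k : ℕ) : ∀ r : ℕ, 1 ≤ r → ∃ a : ℕ → ℤ, ∀ n : ℕ,
    (D n k) ^ r = ∑ j ∈ Finset.Icc k (r * k), a j * D n j := by
  intro r
  induction r with
  | zero => intro h; omega
  | succ r ih =>
    intro _
    rcases Nat.eq_zero_or_pos r with hr0 | hr0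
    · subst hr0
      refine ⟨fun _ => 1, fun n => ?_⟩
      rw [show 1 * k = k by ring, Finset.Icc_self, Finset.sum_singleton]
      ring
    · obtain ⟨a, ha⟩ := ih hr0
      refine ⟨fun m => ∑ j ∈ Finset.Icc k (r * k), a j * c j k m, fun n => ?_⟩
      have expand : (D n k) ^ (r + 1)
          = ∑ j ∈ Finset.Icc k (r * k), a j * (D n j * D n k) := by
        rw [pow_succ, ha n, Finset.sum_mul]
        exact Finset.sum_congr rfl fun j _ => by ring
      rw [expand]
      have inner : ∀ j ∈ Finset.Icc k (r * k),
          a j * (D n j * D n k)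
            = ∑ m ∈ Finset.Icc k ((r + 1) * k), a j * (c j k m * D n m) := by
        intro j hj
        rw [Finset.mem_Icc] at hj
        rw [prod_formula k j n, Finset.mul_sum]
        have e1 : ∑ m ∈ range (j + k + 1), a j * (c j k m * D n m)
            = ∑ m ∈ range ((r + 1) * k + 1), a j * (c j k m * D n m) := by
          apply Finset.sum_subset
          · intro m hm
            rw [Finset.mem_range] at hm ⊢
            have : j ≤ r * k := hj.2
            calc m < j + k + 1 := hm
              _ ≤ r * k + k + 1 := by omega
              _ = (r + 1) * k + 1 := by ring
          · intro m _ hm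
            rw [Finset.mem_range, not_lt] at hm
            rw [c_eq_zero_of_gt (by omega)]
            ring
        have e2 : ∑ m ∈ Finset.Icc k ((r + 1) * k), a j * (c j k m * D n m)
            = ∑ m ∈ range ((r + 1) * k + 1), a j * (c j k m * D n m) := by
          apply Finset.sum_subset
          · intro m hm
            rw [Finset.mem_Icc] at hm
            rw [Finset.mem_range]
            omega
          · intro m _ hm
            rw [Finset.mem_Icc, not_and_or, not_le, not_le] at hm
            rcases hm with h | h
            · rw [c_eq_zero_of_lt j h]; ring
            · exfalso
              have : m < (r + 1) * k + 1 := by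
                have : m ∈ range ((r + 1) * k + 1) := by assumption
                simpa [Finset.mem_range] using this
              omega
        rw [e1, ← e2]
      rw [Finset.sum_congr rfl inner, Finset.sum_comm]
      apply Finset.sum_congr rfl
      intro m _
      rw [Finset.sum_mul]
      exact Finset.sum_congr rfl fun j _ => by ring

end GuoZengAux

theorem guo_zeng_existence (r : ℕ) (hr : 1 ≤ r) (k : ℕ) :
    ∃ a : ℕ → ℤ, ∀ n : ℕ,
      ((n.choose k : ℤ) * (n + k).choose k) ^ r =
        ∑ j ∈ Finset.Icc k (r * k),
          a j * n.choose j * (n + j).choose j := by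
  obtain ⟨a, ha⟩ := GuoZengAux.helper k r hr
  refine ⟨a, fun n => ?_⟩
  have := ha n
  simpa [GuoZengAux.D, mul_assoc] using this
end

section
/- For every integer r ≥ 1, there exists a sequence of integers c(0), c(1), c(2), ... such that for all n ≥ 0: sum over k of C(n,k)^r * C(n+k,k)^r = sum over k of C(n,k)*C(n+k,k)*c(k). (Schmidt's conjecture, proved by Zudilin.) -/
open Finset

namespace SchmidtAux

/-- `f k n = C(n,k) * C(n+k,k)` -/
def f (k n : ℕ) : ℤ := (n.choose k : ℤ) * ((n + k).choose k : ℤ)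

/-- integer structure constants: `f j n * f k n = ∑ m, a j k m * f m n` -/
def a (j k m : ℕ) : ℤ := (m.choose j : ℤ) * (m.choose k : ℤ) * ((j + k).choose m : ℤ)

/-- WZ-style telescoping certificate -/
def G (j k n : ℕ) : ℕ → ℤ
  | 0 => 0
  | (s+1) => -2 * ((s : ℤ) + 1 - j) * ((s : ℤ) + 1 - k) * ((s+1).choose j : ℤ) *
      ((s+1).choose k : ℤ) * ((j+k).choose (s+1) : ℤ) * (n.choose s : ℤ) *
      ((n+s+1).choose (s+1) : ℤ)

lemma Z1 (n k : ℕ) : ((n : ℤ) - k) * (n.choose k : ℤ) = ((k : ℤ) + 1) * (n.choose (k+1) : ℤ) := by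
  rcases le_or_gt k n with h | h
  · have h1 := Nat.choose_succ_right_eq n k
    have h2 : ((n - k : ℕ) : ℤ) = (n : ℤ) - k := by omega
    have h3 : (n.choose (k+1) : ℤ) * ((k : ℤ) + 1) = (n.choose k : ℤ) * ((n : ℤ) - k) := by
      rw [← h2]; exact_mod_cast congrArg (Nat.cast : ℕ → ℤ) h1
    linarith
  · rw [Nat.choose_eq_zero_of_lt h, Nat.choose_eq_zero_of_lt (by omega)]
    simp

lemma Z2 (n k : ℕ) : ((n : ℤ) + 1) * (n.choose k : ℤ) = ((n : ℤ) + 1 - k) * ((n+1).choose k : ℤ) := by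
  have h1 := Z1 (n+1) k
  push_cast at h1
  have h2 : ((n+1) * n.choose k : ℤ) = (((n+1).choose (k+1) : ℕ) : ℤ) * ((k : ℤ) + 1) := by
    exact_mod_cast congrArg (Nat.cast : ℕ → ℤ) (Nat.add_one_mul_choose_eq n k)
  push_cast at h2
  linear_combination h2 - h1

lemma Z3 (n j : ℕ) : ((n : ℤ) + 1) * ((n+1+j).choose j : ℤ) = ((n : ℤ) + 1 + j) * ((n+j).choose j : ℤ) := by
  have h := Z2 (n+j) j
  push_cast at h
  rw [show n+1+j = n+j+1 from by omega]
  linear_combination -h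

lemma Z4 (n m : ℕ) : ((m : ℤ) + 1) * ((n+m+1).choose (m+1) : ℤ) = ((n : ℤ) + m + 1) * ((n+m).choose m : ℤ) := by
  have h : ((n+m+1) * (n+m).choose m : ℤ) = (((n+m+1).choose (m+1) : ℕ) : ℤ) * ((m : ℤ) + 1) := by
    exact_mod_cast congrArg (Nat.cast : ℕ → ℤ) (Nat.add_one_mul_choose_eq (n+m) m)
  push_cast at h
  linear_combination -h

lemma s1 (j k : ℕ) : ((j : ℤ) + k) * ((Nat.choose 0 j : ℤ) * (Nat.choose 0 k : ℤ)) = 0 := by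
  rcases j with _ | j
  · rcases k with _ | k <;> simp
  · simp

lemma s2 (j k : ℕ) : ((1 : ℤ) - j) * ((1 : ℤ) - k) * (Nat.choose 1 j : ℤ) * (Nat.choose 1 k : ℤ) *
    ((j : ℤ) + k) = 0 := by
  rcases j with _ | _ | j <;> rcases k with _ | _ | k <;>
    simp [Nat.choose_eq_zero_of_lt (by omega : 1 < _ + 2)]

lemma cert (j k n m : ℕ) :
    ((n:ℤ)+1-j) * ((n:ℤ)+1-k) * (((n+1).choose m : ℤ) * ((n+1+m).choose m : ℤ) * a j k m)
      - ((n:ℤ)+1+j) * ((n:ℤ)+1+k) * ((n.choose m : ℤ) * ((n+m).choose m : ℤ) * a j k m)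
    = G j k n (m+1) - G j k n m := by
  cases m with
  | zero =>
      simp only [G, a, Nat.choose_zero_right, Nat.choose_one_right, Nat.add_zero, Nat.cast_one,
        Nat.cast_ofNat, Nat.cast_add, zero_add]
      push_cast
      have h1 := s1 j k
      have h2 := s2 j k
      linear_combination (-2*((n:ℤ)+1)) * h1 + (2*((n:ℤ)+1)) * h2
  | succ s =>
      simp only [G, a]
      rw [show n+1+(s+1) = n+s+2 from by omega, show n+(s+1) = n+s+1 from by omega,
        show s+1+1 = s+2 from rfl, show n+s+1+1 = n+s+2 from by omega]
      have h1 : ((s:ℤ)+1) * (n.choose (s+1) : ℤ) = ((n:ℤ)-s) * (n.choose s : ℤ) := (Z1 n s).symm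
      have h2 : ((n:ℤ)+1) * ((n+s+1).choose s : ℤ) = ((s:ℤ)+1) * ((n+s+1).choose (s+1) : ℤ) := by
        have h := Z1 (n+s+1) s
        push_cast at h
        linear_combination h
      have h3 : ((s:ℤ)+2) * ((n+s+2).choose (s+2) : ℤ)
          = ((n:ℤ)+s+2) * ((n+s+1).choose (s+1) : ℤ) := by
        have h := Z4 n (s+1)
        rw [show n+(s+1)+1 = n+s+2 from by omega, show s+1+1 = s+2 from rfl,
          show n+(s+1) = n+s+1 from by omega] at h
        push_cast at h
        linear_combination h
      have h4 : ((n+1).choose (s+1) : ℤ) = (n.choose s : ℤ) + (n.choose (s+1) : ℤ) := by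
        exact_mod_cast congrArg (Nat.cast : ℕ → ℤ) (Nat.choose_succ_succ n s)
      have h5 : ((n+s+2).choose (s+1) : ℤ) = ((n+s+1).choose s : ℤ) + ((n+s+1).choose (s+1) : ℤ) := by
        exact_mod_cast congrArg (Nat.cast : ℕ → ℤ) (Nat.choose_succ_succ (n+s+1) s)
      have h6 : ((s:ℤ)+2-j) * ((s+2).choose j : ℤ) = ((s:ℤ)+2) * ((s+1).choose j : ℤ) := by
        have h := Z2 (s+1) j
        push_cast at h
        linear_combination -h
      have h7 : ((s:ℤ)+2-k) * ((s+2).choose k : ℤ) = ((s:ℤ)+2) * ((s+1).choose k : ℤ) := by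
        have h := Z2 (s+1) k
        push_cast at h
        linear_combination -h
      have h8 : ((s:ℤ)+2) * ((j+k).choose (s+2) : ℤ) = ((j:ℤ)+k-s-1) * ((j+k).choose (s+1) : ℤ) := by
        have h := Z1 (j+k) (s+1)
        push_cast at h
        linear_combination -h
      push_cast
      refine mul_left_cancel₀ (a := ((n:ℤ)+1)*((s:ℤ)+1)*((s:ℤ)+2)^2) (by positivity) ?_
      set N := (n:ℤ); set S := (s:ℤ); set J := (j:ℤ); set K := (k:ℤ)
      set x := (n.choose s : ℤ); set x1 := (n.choose (s+1) : ℤ)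
      set y := ((n+s+1).choose (s+1) : ℤ); set y0 := ((n+s+1).choose s : ℤ)
      set w := ((n+s+2).choose (s+2) : ℤ)
      set p := ((s+1).choose j : ℤ); set q := ((s+1).choose k : ℤ)
      set p2 := ((s+2).choose j : ℤ); set q2 := ((s+2).choose k : ℤ)
      set z := ((j+k).choose (s+1) : ℤ); set z2 := ((j+k).choose (s+2) : ℤ)
      set u2 := ((n+s+2).choose (s+1) : ℤ)
      linear_combination
        ((S+2)^2*((N+1-J)*(N+1-K))*p*q*z*(N+1)*(y0+y) - (N+1)*(S+2)^2*((N+1+J)*(N+1+K))*y*p*q*z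
          + 2*(N+1)*(S+2)^2*p*q*(J+K-S-1)*z*(S+2)*w) * h1
        + ((S+2)^2*((N+1-J)*(N+1-K))*p*q*z*(N+1)*x) * h2
        + (2*(N+1)*(S+2)^2*p*q*(J+K-S-1)*z*(N-S)*x) * h3
        + ((N+1)*(S+1)*(S+2)^2*((N+1-J)*(N+1-K))*u2*p*q*z) * h4
        + ((N+1)*(S+1)*(S+2)^2*((N+1-J)*(N+1-K))*(x1+x)*p*q*z) * h5
        + (2*(N+1)*(S+1)*(S+2)^2*(S+2-K)*q2*z2*x1*w) * h6
        + (2*(N+1)*(S+1)*(S+2)^2*(S+2)*p*z2*x1*w) * h7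
        + (2*(N+1)*(S+2)^2*p*q*(S+1)*x1*(S+2)*w) * h8

/-- the linear combination `L j k n = ∑ m ≤ n, a j k m * f m n` -/
def L (j k n : ℕ) : ℤ := ∑ m ∈ range (n+1), a j k m * f m n

lemma f_eq_zero {m n : ℕ} (h : n < m) : f m n = 0 := by
  simp [f, Nat.choose_eq_zero_of_lt h]

lemma L_ext (j k n N : ℕ) (h : n + 1 ≤ N) :
    ∑ m ∈ range N, a j k m * f m n = L j k n := by
  rw [L]
  symm
  apply Finset.sum_subset (Finset.range_subset_range.2 h)
  intro m hm hm'
  simp only [mem_range] at hm hm'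
  rw [f_eq_zero (by omega)]
  ring

lemma step2 (j k n : ℕ) :
    ((n:ℤ)+1-j) * ((n:ℤ)+1-k) * L j k (n+1) = ((n:ℤ)+1+j) * ((n:ℤ)+1+k) * L j k n := by
  have key : ∑ m ∈ range (n+j+k+2),
      (((n:ℤ)+1-j) * ((n:ℤ)+1-k) * (((n+1).choose m : ℤ) * ((n+1+m).choose m : ℤ) * a j k m)
        - ((n:ℤ)+1+j) * ((n:ℤ)+1+k) * ((n.choose m : ℤ) * ((n+m).choose m : ℤ) * a j k m))
      = G j k n (n+j+k+2) - G j k n 0 := by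
    rw [← Finset.sum_range_sub (G j k n) (n+j+k+2)]
    exact Finset.sum_congr rfl fun m _ => cert j k n m
  have hG0 : G j k n 0 = 0 := rfl
  have hGN : G j k n (n+j+k+2) = 0 := by
    show G j k n ((n+j+k+1)+1) = 0
    have : (j+k).choose (n+j+k+1+1) = 0 := Nat.choose_eq_zero_of_lt (by omega)
    simp [G, this]
  rw [hG0, hGN, sub_zero] at key
  rw [Finset.sum_sub_distrib] at key
  have e1 : ∑ m ∈ range (n+j+k+2),
      ((n:ℤ)+1-j) * ((n:ℤ)+1-k) * (((n+1).choose m : ℤ) * ((n+1+m).choose m : ℤ) * a j k m)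
      = ((n:ℤ)+1-j) * ((n:ℤ)+1-k) * L j k (n+1) := by
    rw [← Finset.mul_sum]
    congr 1
    rw [← L_ext j k (n+1) (n+j+k+2) (by omega)]
    exact Finset.sum_congr rfl fun m _ => by rw [f]; ring
  have e2 : ∑ m ∈ range (n+j+k+2),
      ((n:ℤ)+1+j) * ((n:ℤ)+1+k) * ((n.choose m : ℤ) * ((n+m).choose m : ℤ) * a j k m)
      = ((n:ℤ)+1+j) * ((n:ℤ)+1+k) * L j k n := by
    rw [← Finset.mul_sum]
    congr 1
    rw [← L_ext j k n (n+j+k+2) (by omega)]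
    exact Finset.sum_congr rfl fun m _ => by rw [f]; ring
  rw [e1, e2] at key
  linarith

lemma step3 (j k n : ℕ) :
    ((n:ℤ)+1-j) * ((n:ℤ)+1-k) * (f j (n+1) * f k (n+1))
      = ((n:ℤ)+1+j) * ((n:ℤ)+1+k) * (f j n * f k n) := by
  have h1 := Z2 n j
  have h2 := Z2 n k
  have h3 := Z3 n j
  have h4 := Z3 n k
  simp only [f]
  refine mul_left_cancel₀ (a := ((n:ℤ)+1)^2) (by positivity) ?_
  linear_combination
    (-((n:ℤ)+1-k) * ((n+1).choose k : ℤ) * ((n:ℤ)+1) * ((n+1+j).choose j : ℤ) *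
        ((n:ℤ)+1) * ((n+1+k).choose k : ℤ)) * h1
    + (-((n:ℤ)+1) * (n.choose j : ℤ) * ((n:ℤ)+1) * ((n+1+j).choose j : ℤ) *
        ((n:ℤ)+1) * ((n+1+k).choose k : ℤ)) * h2
    + (((n:ℤ)+1) * (n.choose j : ℤ) * ((n:ℤ)+1) * (n.choose k : ℤ) *
        ((n:ℤ)+1) * ((n+1+k).choose k : ℤ)) * h3
    + (((n:ℤ)+1) * (n.choose j : ℤ) * ((n:ℤ)+1) * (n.choose k : ℤ) *
        ((n:ℤ)+1+j) * ((n+j).choose j : ℤ)) * h4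

lemma symm_helper (u v : ℕ) : (u + v).choose u = (u + v).choose v := by
  rw [← Nat.choose_symm (by omega : u ≤ u + v)]
  congr 1
  omega

lemma prod_lemma (j k n : ℕ) : f j n * f k n = L j k n := by
  induction n with
  | zero => simp [f, L, a]
  | succ n IH =>
      by_cases hj : j = n + 1
      · subst hj
        rw [L, Finset.sum_eq_single (n+1)]
        · have hs : (n+1+k).choose (n+1) = (n+1+k).choose k := symm_helper (n+1) k
          simp only [f, a, Nat.choose_self, Nat.cast_one, hs]
          ring
        · intro m hm hne
          have : m < n + 1 := by
            simp only [mem_range] at hm; omega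
          simp [a, Nat.choose_eq_zero_of_lt this]
        · intro h
          exact absurd (Finset.self_mem_range_succ (n+1)) h
      · by_cases hk : k = n + 1
        · subst hk
          rw [L, Finset.sum_eq_single (n+1)]
          · have e : j + (n+1) = n+1+j := by omega
            have hs : (n+1+j).choose (n+1) = (n+1+j).choose j := by
              rw [← e]; exact (symm_helper j (n+1)).symm
            simp only [f, a, Nat.choose_self, Nat.cast_one, e, hs]
            ring
          · intro m hm hne
            have : m < n + 1 := by
              simp only [mem_range] at hm; omega
            simp [a, Nat.choose_eq_zero_of_lt this]
          · intro h
            exact absurd (Finset.self_mem_range_succ (n+1)) h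
        · have hα : ((n:ℤ)+1-j) * ((n:ℤ)+1-k) ≠ 0 := by
            have h1 : ((n:ℤ)+1-j) ≠ 0 := by
              rw [sub_ne_zero]
              intro h
              exact hj (by exact_mod_cast h : n + 1 = j).symm
            have h2 : ((n:ℤ)+1-k) ≠ 0 := by
              rw [sub_ne_zero]
              intro h
              exact hk (by exact_mod_cast h : n + 1 = k).symm
            exact mul_ne_zero h1 h2
          refine mul_left_cancel₀ hα ?_
          rw [step3 j k n, step2 j k n, IH]

lemma pow_rep (r : ℕ) (hr : 1 ≤ r) (k : ℕ) :
    ∃ b : ℕ → ℤ, (∀ i, i < k → b i = 0) ∧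
      ∀ n, (f k n) ^ r = ∑ i ∈ range (n+1), b i * f i n := by
  induction r, hr using Nat.le_induction with
  | base =>
      refine ⟨fun i => if i = k then 1 else 0, fun i hi => if_neg (by omega), fun n => ?_⟩
      rw [pow_one]
      have : ∀ i ∈ range (n+1), (if i = k then (1:ℤ) else 0) * f i n
          = if i = k then f i n else 0 := by
        intro i _
        split <;> simp
      rw [Finset.sum_congr rfl this, Finset.sum_ite_eq' (range (n+1)) k (fun i => f i n)]
      by_cases h : k ∈ range (n+1)
      · rw [if_pos h]
      · rw [if_neg h, f_eq_zero]
        simp only [mem_range] at h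
        omega
  | succ r hr IH =>
      obtain ⟨b, hsupp, hb⟩ := IH
      refine ⟨fun m => ∑ i ∈ range (m+1), b i * a i k m, fun m hm => ?_, fun n => ?_⟩
      · apply Finset.sum_eq_zero
        intro i _
        simp [a, Nat.choose_eq_zero_of_lt hm]
      · calc (f k n) ^ (r+1) = (f k n) ^ r * f k n := by rw [pow_succ]
          _ = (∑ i ∈ range (n+1), b i * f i n) * f k n := by rw [hb n]
          _ = ∑ i ∈ range (n+1), b i * (f i n * f k n) := by
              rw [Finset.sum_mul]; exact Finset.sum_congr rfl fun i _ => by ring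
          _ = ∑ i ∈ range (n+1), b i * ∑ m ∈ range (n+1), a i k m * f m n := by
              refine Finset.sum_congr rfl fun i _ => ?_
              rw [prod_lemma i k n, L]
          _ = ∑ m ∈ range (n+1), (∑ i ∈ range (n+1), b i * a i k m) * f m n := by
              simp_rw [Finset.mul_sum, Finset.sum_mul]
              rw [Finset.sum_comm]
              exact Finset.sum_congr rfl fun m _ => Finset.sum_congr rfl fun i _ => by ring
          _ = ∑ m ∈ range (n+1), (∑ i ∈ range (m+1), b i * a i k m) * f m n := by
              refine Finset.sum_congr rfl fun m hm => ?_
              simp only [mem_range] at hm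
              congr 1
              symm
              apply Finset.sum_subset (Finset.range_subset_range.2 (by omega))
              intro i _ hi
              simp only [mem_range] at hi
              have : m < i := by omega
              simp [a, Nat.choose_eq_zero_of_lt this]

end SchmidtAux

open SchmidtAux in
theorem schmidt_conjecture (r : ℕ) (hr : 1 ≤ r) :
    ∃ c : ℕ → ℤ, ∀ n : ℕ,
      ∑ k ∈ Finset.range (n + 1),
          ((n.choose k : ℤ) * (n + k).choose k) ^ r =
        ∑ k ∈ Finset.range (n + 1),
          (n.choose k : ℤ) * (n + k).choose k * c k := by
  choose B hsupp hmain using pow_rep r hr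
  refine ⟨fun i => ∑ t ∈ range (i+1), B t i, fun n => ?_⟩
  calc ∑ k ∈ range (n+1), ((n.choose k : ℤ) * (n + k).choose k) ^ r
      = ∑ k ∈ range (n+1), (f k n) ^ r := rfl
    _ = ∑ k ∈ range (n+1), ∑ i ∈ range (n+1), B k i * f i n :=
        Finset.sum_congr rfl fun k _ => hmain k n
    _ = ∑ i ∈ range (n+1), (∑ k ∈ range (n+1), B k i) * f i n := by
        rw [Finset.sum_comm]
        exact Finset.sum_congr rfl fun i _ => by rw [Finset.sum_mul]
    _ = ∑ i ∈ range (n+1), (∑ k ∈ range (i+1), B k i) * f i n := by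
        refine Finset.sum_congr rfl fun i hi => ?_
        simp only [mem_range] at hi
        congr 1
        symm
        apply Finset.sum_subset (Finset.range_subset_range.2 (by omega))
        intro t _ ht
        simp only [mem_range] at ht
        exact hsupp t i (by omega)
    _ = ∑ k ∈ range (n+1), (n.choose k : ℤ) * (n + k).choose k * (∑ t ∈ range (k+1), B t k) := by
        exact Finset.sum_congr rfl fun i _ => by rw [f]; ring
end

section
/- Define a(r,k,j) by a(1,k,k) = 1, a(1,k,j) = 0 for j ≠ k, and a(r+1,k,j) = sum over i of C(k+i,i)*C(k,j-i)*C(j,k)*a(r,k,i). Define c(r,k) = sum over i of a(r,i,k). Then for all n ≥ 0 and r ≥ 1: sum over i of C(n,i)^r * C(n+i,i)^r = sum over k of C(n,k)*C(n+k,k)*c(r,k). In particular the Schmidt numbers c(r,k) are integers. -/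
open Finset

private lemma zf2 (j k : ℕ) : ((k : ℤ) + 1) * (j.choose (k + 1) : ℤ) = ((j : ℤ) - k) * (j.choose k : ℤ) := by
  rcases le_or_gt k j with h | h
  · have h0 := congrArg (Nat.cast : ℕ → ℤ) (Nat.choose_succ_right_eq j k)
    push_cast [Nat.cast_sub h] at h0
    linarith
  · rw [Nat.choose_eq_zero_of_lt h, Nat.choose_eq_zero_of_lt (h.trans (Nat.lt_succ_self k))]
    push_cast; ring

private lemma zf1 (i k : ℕ) : ((k : ℤ) + 1) * ((k + i + 1).choose i : ℤ) = ((k : ℤ) + i + 1) * ((k + i).choose i : ℤ) := by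
  have h0 := congrArg (Nat.cast : ℕ → ℤ) (Nat.add_one_mul_choose_eq (k + i) k)
  have s1 : (k + i).choose k = (k + i).choose i := by
    rw [← Nat.choose_symm (Nat.le_add_right k i)]; congr 1; omega
  have s2 : (k + i + 1).choose (k + 1) = (k + i + 1).choose i := by
    rw [← Nat.choose_symm (by omega : k + 1 ≤ k + i + 1)]; congr 1; omega
  rw [s1, s2] at h0
  push_cast at h0
  linarith

private lemma zf4 (k t : ℕ) (ht : 1 ≤ t) :
    (t : ℤ) * (k.choose t : ℤ) = ((k : ℤ) + 1 - t) * (k.choose (t - 1) : ℤ) := by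
  rcases le_or_gt t (k + 1) with h | h
  · have h0 := congrArg (Nat.cast : ℕ → ℤ) (Nat.choose_succ_right_eq k (t - 1))
    rw [show t - 1 + 1 = t from by omega] at h0
    push_cast [Nat.cast_sub (by omega : t - 1 ≤ k), Nat.cast_sub ht] at h0
    linarith
  · rw [Nat.choose_eq_zero_of_lt (by omega), Nat.choose_eq_zero_of_lt (by omega)]
    push_cast; ring

private lemma zf5 (j k : ℕ) (hj : 1 ≤ j) :
    ((j : ℤ) - k) * (j.choose k : ℤ) = (j : ℤ) * ((j - 1).choose k : ℤ) := by
  have h0 := congrArg (Nat.cast : ℕ → ℤ) (Nat.add_one_mul_choose_eq (j - 1) k)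
  rw [show j - 1 + 1 = j from by omega] at h0
  push_cast at h0
  have h1 := zf2 j k
  linarith

private def Bf (n j : ℕ) : ℤ := (n.choose j : ℤ) * ((n + j).choose j : ℤ)

private def cf (i k j : ℕ) : ℤ :=
  if i ≤ j then ((k + i).choose i * k.choose (j - i) * j.choose k : ℤ) else 0

private lemma Bstep (n k : ℕ) :
    ((n : ℤ) - k) * ((n : ℤ) + k + 1) * Bf n k = ((k : ℤ) + 1) ^ 2 * Bf n (k + 1) := by
  have h1 := zf2 n k
  have h2 := congrArg (Nat.cast : ℕ → ℤ) (Nat.add_one_mul_choose_eq (n + k) k)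
  push_cast at h2
  unfold Bf
  rw [show n + (k + 1) = n + k + 1 from by omega]
  linear_combination (-((n:ℤ)+k+1) * ((n+k).choose k : ℤ)) * h1 + (((k:ℤ)+1) * (n.choose (k+1) : ℤ)) * h2

private lemma crec (i k j : ℕ) :
    ((k : ℤ) + 1) ^ 2 * cf i (k + 1) j
      = (j : ℤ) ^ 2 * cf i k (j - 1) + ((j : ℤ) - k) * ((j : ℤ) + k + 1) * cf i k j := by
  rcases lt_trichotomy j i with h | h | h
  · have g1 : ¬ i ≤ j := by omega
    have g2 : ¬ i ≤ j - 1 := by omega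
    simp [cf, g1, g2]
  · subst h
    have hz : ((j : ℤ)) ^ 2 * cf j k (j - 1) = 0 := by
      rcases Nat.eq_zero_or_pos j with h0 | h0
      · subst h0; norm_num
      · have : ¬ j ≤ j - 1 := by omega
        simp [cf, this]
    rw [hz, zero_add]
    simp only [cf, if_pos le_rfl, Nat.sub_self, Nat.choose_zero_right, Nat.choose_self]
    rw [show k + 1 + j = k + j + 1 from by omega]
    have ha := zf1 j k
    have hb := zf2 j k
    push_cast
    linear_combination ((k:ℤ)+1) * (j.choose (k+1) : ℤ) * ha
      + ((k:ℤ)+j+1) * ((k+j).choose j : ℤ) * hb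
  · obtain ⟨s, rfl⟩ : ∃ s, j = i + (s + 1) := ⟨j - i - 1, by omega⟩
    rw [show i + (s + 1) - 1 = i + s from by omega]
    simp only [cf, if_pos (Nat.le_add_right i (s+1)), if_pos (Nat.le_add_right i s),
      Nat.add_sub_cancel_left]
    rw [show k + 1 + i = k + i + 1 from by omega]
    have h1 := zf1 i k
    have h2 := zf2 (i + (s + 1)) k
    have h3 := congrArg (Nat.cast : ℕ → ℤ) (Nat.choose_succ_succ k s)
    have h4 := zf4 k (s + 1) (by omega)
    have h5 := zf5 (i + (s + 1)) k (by omega)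
    rw [show i + (s + 1) - 1 = i + s from by omega] at h5
    rw [show s + 1 - 1 = s from rfl] at h4
    push_cast at h1 h2 h3 h4 h5 ⊢
    linear_combination
      ((k:ℤ)+1) * ((k+1).choose (s+1) : ℤ) * ((i+(s+1)).choose (k+1) : ℤ) * h1
      + ((k:ℤ)+i+1) * ((k+i).choose i : ℤ) * ((k+1).choose (s+1) : ℤ) * h2
      + ((k:ℤ)+i+1) * ((i:ℤ)+(s+1)-k) * ((k+i).choose i : ℤ) * ((i+(s+1)).choose k : ℤ) * h3
      - ((i:ℤ)+(s+1)-k) * ((k+i).choose i : ℤ) * ((i+(s+1)).choose k : ℤ) * h4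
      + ((i:ℤ)+(s+1)) * ((k+i).choose i : ℤ) * (k.choose s : ℤ) * h5

private lemma Bf_top (n : ℕ) : Bf n (n + 1) = 0 := by
  simp [Bf, Nat.choose_eq_zero_of_lt (Nat.lt_succ_self n)]

private lemma keyK (n i k : ℕ) :
    Bf n i * Bf n k = ∑ j ∈ Finset.range (n + 1), cf i k j * Bf n j := by
  induction k with
  | zero =>
    have hB0 : Bf n 0 = 1 := by simp [Bf]
    rw [hB0, mul_one]
    rcases le_or_gt i n with h | h
    · rw [Finset.sum_eq_single i]
      · have : cf i 0 i = 1 := by simp [cf]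
        rw [this, one_mul]
      · intro j hj hne
        have : cf i 0 j = 0 := by
          rcases le_or_gt i j with h2 | h2
          · have : 0 < j - i := by omega
            simp [cf, h2, Nat.choose_eq_zero_of_lt this]
          · unfold cf; rw [if_neg (by omega)]
        rw [this, zero_mul]
      · intro hmem
        exact absurd (Finset.mem_range.mpr (by omega)) hmem
    · have hBi : Bf n i = 0 := by
        simp [Bf, Nat.choose_eq_zero_of_lt h]
      rw [hBi]
      symm
      apply Finset.sum_eq_zero
      intro j hj
      have : ¬ i ≤ j := by simp at hj; omega
      simp [cf, this]
  | succ k ih =>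
    apply mul_left_cancel₀ (a := ((k : ℤ) + 1) ^ 2) (by positivity)
    have step1 : ((k : ℤ) + 1) ^ 2 * (Bf n i * Bf n (k + 1))
        = ((n : ℤ) - k) * ((n : ℤ) + k + 1) * (Bf n i * Bf n k) := by
      have := Bstep n k
      linear_combination (-(Bf n i)) * this
    rw [step1, ih, Finset.mul_sum]
    have step2 : ∀ j ∈ Finset.range (n + 1),
        ((n : ℤ) - k) * ((n : ℤ) + k + 1) * (cf i k j * Bf n j)
          = cf i k j * (((j : ℤ) + 1) ^ 2 * Bf n (j + 1))
            + ((j : ℤ) - k) * ((j : ℤ) + k + 1) * (cf i k j * Bf n j) := by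
      intro j hj
      have := Bstep n j
      linear_combination cf i k j * this
    rw [Finset.sum_congr rfl step2, Finset.sum_add_distrib]
    have step3 : ∑ j ∈ Finset.range (n + 1), cf i k j * (((j : ℤ) + 1) ^ 2 * Bf n (j + 1))
        = ∑ j ∈ Finset.range (n + 1), (j : ℤ) ^ 2 * cf i k (j - 1) * Bf n j := by
      rw [Finset.sum_range_succ, Finset.sum_range_succ', Bf_top, mul_zero, mul_zero, add_zero]
      have : ((0 : ℕ) : ℤ) ^ 2 * cf i k (0 - 1) * Bf n 0 = 0 := by norm_num
      rw [this, add_zero]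
      apply Finset.sum_congr rfl
      intro j hj
      rw [show j + 1 - 1 = j from rfl]
      push_cast
      ring
    rw [step3, ← Finset.sum_add_distrib, Finset.mul_sum]
    apply Finset.sum_congr rfl
    intro j hj
    have := crec i k j
    linear_combination (-(Bf n j)) * this

theorem schmidt_numbers_integral (a : ℕ → ℕ → ℕ → ℤ)
    (h1 : ∀ k, a 1 k k = 1)
    (h2 : ∀ k j, j ≠ k → a 1 k j = 0)
    (hrec : ∀ r, 1 ≤ r → ∀ k j, a (r + 1) k j =
      ∑ i ∈ Finset.range (j + 1),
        ((k + i).choose i * k.choose (j - i) * j.choose k : ℤ) * a r k i) :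
    ∀ r, 1 ≤ r → ∀ n : ℕ,
      ∑ i ∈ Finset.range (n + 1),
          ((n.choose i : ℤ) * (n + i).choose i) ^ r =
        ∑ k ∈ Finset.range (n + 1),
          (n.choose k : ℤ) * (n + k).choose k *
            (∑ i ∈ Finset.range (k + 1), a r i k) := by
  have lemA : ∀ r, 1 ≤ r → ∀ k j, j < k → a r k j = 0 := by
    intro r hr k j hjk
    match r, hr with
    | 1, _ => exact h2 k j (by omega)
    | (r + 2), _ =>
      rw [hrec (r + 1) (by omega) k j]
      apply Finset.sum_eq_zero
      intro i hi
      simp [Nat.choose_eq_zero_of_lt hjk]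
  have expand : ∀ r, 1 ≤ r → ∀ k n : ℕ,
      (Bf n k) ^ r = ∑ j ∈ Finset.range (n + 1), a r k j * Bf n j := by
    intro r hr
    induction r, hr using Nat.le_induction with
    | base =>
      intro k n
      rw [pow_one]
      rcases le_or_gt k n with h | h
      · rw [Finset.sum_eq_single k]
        · rw [h1 k, one_mul]
        · intro j hj hne
          rw [h2 k j hne, zero_mul]
        · intro hmem
          exact absurd (Finset.mem_range.mpr (by omega)) hmem
      · have hBk : Bf n k = 0 := by simp [Bf, Nat.choose_eq_zero_of_lt h]
        rw [hBk]
        symm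
        apply Finset.sum_eq_zero
        intro j hj
        have : j ≠ k := by simp at hj; omega
        rw [h2 k j this, zero_mul]
    | succ r hr ih =>
      intro k n
      rw [pow_succ, ih k n, Finset.sum_mul]
      have hterm : ∀ i ∈ Finset.range (n + 1),
          (a r k i * Bf n i) * Bf n k
            = ∑ j ∈ Finset.range (n + 1), a r k i * (cf i k j * Bf n j) := by
        intro i hi
        rw [← Finset.mul_sum, ← keyK n i k]
        ring
      rw [Finset.sum_congr rfl hterm, Finset.sum_comm]
      apply Finset.sum_congr rfl
      intro j hj
      have hsub : Finset.range (j + 1) ⊆ Finset.range (n + 1) :=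
        Finset.range_subset_range.mpr (by simp at hj; omega)
      have e0 : ∀ i ∈ Finset.range (n + 1),
          a r k i * (cf i k j * Bf n j) = (cf i k j * a r k i) * Bf n j := by
        intro i _; ring
      rw [Finset.sum_congr rfl e0, ← Finset.sum_mul]
      congr 1
      have e1 : ∑ i ∈ Finset.range (n + 1), cf i k j * a r k i
          = ∑ i ∈ Finset.range (j + 1), cf i k j * a r k i := by
        symm
        apply Finset.sum_subset hsub
        intro x hx hnx
        have : ¬ x ≤ j := by simp at hnx; omega
        unfold cf
        rw [if_neg this, zero_mul]
      rw [e1, hrec r hr k j]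
      apply Finset.sum_congr rfl
      intro i hi
      have : i ≤ j := by simp at hi; omega
      unfold cf
      rw [if_pos this]
  intro r hr n
  calc ∑ i ∈ Finset.range (n + 1), ((n.choose i : ℤ) * (n + i).choose i) ^ r
      = ∑ i ∈ Finset.range (n + 1), ∑ j ∈ Finset.range (n + 1), a r i j * Bf n j := by
        apply Finset.sum_congr rfl
        intro i _
        exact expand r hr i n
    _ = ∑ j ∈ Finset.range (n + 1), ∑ i ∈ Finset.range (n + 1), a r i j * Bf n j :=
        Finset.sum_comm
    _ = ∑ k ∈ Finset.range (n + 1),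
          (n.choose k : ℤ) * (n + k).choose k * (∑ i ∈ Finset.range (k + 1), a r i k) := by
        apply Finset.sum_congr rfl
        intro j hj
        rw [← Finset.sum_mul]
        have e2 : ∑ i ∈ Finset.range (n + 1), a r i j
            = ∑ i ∈ Finset.range (j + 1), a r i j := by
          symm
          apply Finset.sum_subset (Finset.range_subset_range.mpr (by simp at hj; omega))
          intro x hx hnx
          exact lemA r hr x j (by simp at hnx hx ⊢; omega)
        rw [e2]
        unfold Bf
        ring
end

section
/- For all n ≥ 0: sum over j of C(n,j)^3 = sum over j of C(n,j)^2 * C(2j,n). (The two expressions for the Franel numbers.) -/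
open Finset

lemma franel_inner (n a : ℕ) (ha : a ≤ n) :
    ∑ j ∈ Finset.range (n + 1), n.choose j ^ 2 * (j.choose a * j.choose (n - a)) =
      n.choose a ^ 3 := by
  set b := n - a with hb
  have hab : a + b = n := by omega
  -- drop the terms with j < a
  have hsub : Finset.Ico a (n + 1) ⊆ Finset.range (n + 1) := by
    intro x hx
    simp only [Finset.mem_Ico] at hx
    simp [hx.2]
  rw [← Finset.sum_subset hsub (by
    intro x hx hx'
    simp only [Finset.mem_range] at hx
    simp only [Finset.mem_Ico, not_and, not_lt] at hx'
    have hxa : x < a := by by_contra h; exact absurd hx (by omega)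
    simp [Nat.choose_eq_zero_of_lt hxa])]
  -- termwise rewrite on Ico a (n+1)
  have hterm : ∀ j ∈ Finset.Ico a (n + 1),
      n.choose j ^ 2 * (j.choose a * j.choose b)
        = (n.choose a * n.choose b) * (b.choose (j - a) * a.choose (n - j)) := by
    intro j hj
    simp only [Finset.mem_Ico] at hj
    obtain ⟨haj, hjn⟩ := hj
    have hjn' : j ≤ n := by omega
    rcases le_or_gt b j with hbj | hbj
    · have h1 : n.choose j * j.choose a = n.choose a * b.choose (j - a) := by
        rw [Nat.choose_mul haj]
      have h2 : n.choose j * j.choose b = n.choose b * a.choose (j - b) := by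
        rw [Nat.choose_mul hbj]
        congr 1
        congr 1
        omega
      have h3 : a.choose (j - b) = a.choose (n - j) := by
        have hle : j - b ≤ a := by omega
        rw [← Nat.choose_symm hle]
        congr 1
        omega
      calc n.choose j ^ 2 * (j.choose a * j.choose b)
          = (n.choose j * j.choose a) * (n.choose j * j.choose b) := by ring
        _ = (n.choose a * b.choose (j - a)) * (n.choose b * a.choose (j - b)) := by
            rw [h1, h2]
        _ = (n.choose a * n.choose b) * (b.choose (j - a) * a.choose (n - j)) := by
            rw [h3]; ring
    · have h1 : j.choose b = 0 := Nat.choose_eq_zero_of_lt hbj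
      have h2 : a.choose (n - j) = 0 := Nat.choose_eq_zero_of_lt (by omega)
      simp [h1, h2]
  rw [Finset.sum_congr rfl hterm, ← Finset.mul_sum]
  have hrange : n + 1 = a + (b + 1) := by omega
  rw [hrange, Finset.sum_Ico_eq_sum_range]
  have hsum : ∑ i ∈ Finset.range (b + 1), b.choose (a + i - a) * a.choose (n - (a + i))
      = ∑ i ∈ Finset.range (b + 1), b.choose i * a.choose (b - i) := by
    refine Finset.sum_congr rfl fun i hi => ?_
    simp only [Finset.mem_range] at hi
    congr 1
    · congr 1; omega
    · congr 1; omega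
  rw [show a + (b + 1) - a = b + 1 from by omega, hsum, ← Finset.Nat.sum_antidiagonal_eq_sum_range_succ_mk
      (fun p => b.choose p.1 * a.choose p.2), ← Nat.add_choose_eq]
  have hba : (b + a).choose b = n.choose a := by
    rw [Nat.add_comm, hab, hb, Nat.choose_symm ha]
  rw [hba, hb, Nat.choose_symm ha]
  ring

theorem franel_two_forms (n : ℕ) :
    ∑ j ∈ Finset.range (n + 1), (n.choose j) ^ 3 =
      ∑ j ∈ Finset.range (n + 1), (n.choose j) ^ 2 * (2 * j).choose n := by
  have hrhs : ∀ j : ℕ, (n.choose j) ^ 2 * (2 * j).choose n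
      = ∑ a ∈ Finset.range (n + 1), n.choose j ^ 2 * (j.choose a * j.choose (n - a)) := by
    intro j
    rw [two_mul, Nat.add_choose_eq, Finset.Nat.sum_antidiagonal_eq_sum_range_succ_mk,
      Finset.mul_sum]
  calc ∑ j ∈ Finset.range (n + 1), (n.choose j) ^ 3
      = ∑ a ∈ Finset.range (n + 1),
          ∑ j ∈ Finset.range (n + 1), n.choose j ^ 2 * (j.choose a * j.choose (n - a)) := by
        refine Finset.sum_congr rfl fun a haIn => ?_
        simp only [Finset.mem_range] at haIn
        rw [franel_inner n a (by omega)]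
    _ = ∑ j ∈ Finset.range (n + 1),
          ∑ a ∈ Finset.range (n + 1), n.choose j ^ 2 * (j.choose a * j.choose (n - a)) :=
        Finset.sum_comm
    _ = ∑ j ∈ Finset.range (n + 1), (n.choose j) ^ 2 * (2 * j).choose n := by
        refine Finset.sum_congr rfl fun j _ => ?_
        rw [hrhs j]
end

section
/- For all n ≥ 0: sum over k of C(n,k)^2 * C(n+k,k)^2 = sum over k of C(n,k)*C(n+k,k) * (sum over j of C(k,j)^3). That is, c(2)_k equals the k-th Franel number sum_j C(k,j)^3. -/
open Finset


lemma vdm_range (m n k : ℕ) :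
    (m + n).choose k = ∑ i ∈ range (k+1), m.choose i * n.choose (k - i) := by
  rw [Nat.add_choose_eq, Finset.Nat.sum_antidiagonal_eq_sum_range_succ_mk]

lemma lemA_inner (K i : ℕ) (hi : i ≤ K) :
    ∑ j ∈ range (K+1), (K.choose j)^2 * (j.choose i * j.choose (K-i)) = (K.choose i)^3 := by
  have key : ∀ j ∈ range (K+1), (K.choose j)^2 * (j.choose i * j.choose (K-i))
      = (K.choose i)^2 * (if i ≤ j then (K-i).choose (j-i) * i.choose (K-j) else 0) := by
    intro j hj
    simp only [Finset.mem_range] at hj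
    have hjK : j ≤ K := by omega
    by_cases h1 : j < i
    · rw [if_neg (by omega), Nat.choose_eq_zero_of_lt h1]
      ring
    · by_cases h2 : j < K - i
      · rw [if_pos (by omega), Nat.choose_eq_zero_of_lt (show j < K - i from h2),
          Nat.choose_eq_zero_of_lt (show i < K - j by omega)]
        ring
      · have hij : i ≤ j := by omega
        have hKij : K - i ≤ j := by omega
        have e1 : K.choose j * j.choose i = K.choose i * (K-i).choose (j-i) :=
          Nat.choose_mul hij
        have e2 : K.choose j * j.choose (K-i) = K.choose i * i.choose (K-j) := by
          have := Nat.choose_mul (n := K) hKij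
          rwa [Nat.choose_symm hi, show K-(K-i) = i from by omega,
            show j-(K-i) = i-(K-j) from by omega, Nat.choose_symm (by omega : K-j ≤ i)] at this
        rw [if_pos hij, pow_two, pow_two]
        calc K.choose j * K.choose j * (j.choose i * j.choose (K-i))
            = (K.choose j * j.choose i) * (K.choose j * j.choose (K-i)) := by ring
          _ = (K.choose i * (K-i).choose (j-i)) * (K.choose i * i.choose (K-j)) := by
              rw [e1, e2]
          _ = _ := by ring
  rw [Finset.sum_congr rfl key, ← Finset.mul_sum]
  have hsum : (∑ j ∈ range (K+1), if i ≤ j then (K-i).choose (j-i) * i.choose (K-j) else 0)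
      = K.choose i := by
    rw [Finset.range_eq_Ico, ← Finset.sum_Ico_consecutive _ (Nat.zero_le i) (by omega : i ≤ K+1)]
    rw [Finset.sum_eq_zero (fun j hj => if_neg (by simp at hj; omega)), zero_add]
    rw [Finset.sum_congr rfl (fun j hj => if_pos (by simp at hj; omega)),
      Finset.sum_Ico_eq_sum_range]
    have : ∀ s, (K-i).choose ((i+s)-i) * i.choose (K-(i+s)) = (K-i).choose s * i.choose ((K-i)-s) := by
      intro s
      rw [Nat.add_sub_cancel_left, show K-(i+s) = (K-i)-s from by omega]
    rw [Finset.sum_congr rfl (fun s _ => this s), show K+1-i = (K-i)+1 from by omega,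
      ← vdm_range (K-i) i (K-i), show K-i+i = K from by omega, Nat.choose_symm hi]
  rw [hsum]
  ring
lemma lemA (K : ℕ) :
    ∑ j ∈ range (K+1), (K.choose j)^2 * (2*j).choose K
      = ∑ i ∈ range (K+1), (K.choose i)^3 := by
  have h2j : ∀ j : ℕ, (2*j).choose K = ∑ i ∈ range (K+1), j.choose i * j.choose (K-i) := by
    intro j
    rw [← vdm_range]
    congr 1
    omega
  calc ∑ j ∈ range (K+1), (K.choose j)^2 * (2*j).choose K
      = ∑ j ∈ range (K+1), ∑ i ∈ range (K+1), (K.choose j)^2 * (j.choose i * j.choose (K-i)) := by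
        refine Finset.sum_congr rfl fun j _ => ?_
        rw [h2j j, Finset.mul_sum]
    _ = ∑ i ∈ range (K+1), ∑ j ∈ range (K+1), (K.choose j)^2 * (j.choose i * j.choose (K-i)) :=
        Finset.sum_comm
    _ = _ := Finset.sum_congr rfl fun i hi => lemA_inner K i (by simp at hi; omega)


def Fs (x y a b : ℕ) : ℕ :=
  ∑ k ∈ range (b+1), if k ≤ a then (x + y + k).choose k * x.choose (b - k) * y.choose (a - k) else 0

lemma tri (y a b : ℕ) (hba : b ≤ a) :
    (y+b).choose b * y.choose (a-b) = a.choose b * (y+b).choose a := by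
  rcases le_or_gt a (y+b) with h | h
  · have := Nat.choose_mul (n := y+b) hba
    rw [Nat.add_sub_cancel] at this
    rw [← this]; ring
  · rw [Nat.choose_eq_zero_of_lt (by omega : y < a - b),
      Nat.choose_eq_zero_of_lt h]
    ring

lemma Fs_zero_x (y a b : ℕ) : Fs 0 y a b = a.choose b * (y+b).choose a := by
  unfold Fs
  rw [Finset.sum_eq_single b]
  · rcases le_or_gt b a with h | h
    · rw [if_pos h]
      simp only [Nat.sub_self, Nat.choose_self, Nat.zero_add]
      rw [mul_one]; exact tri y a b h
    · rw [if_neg (by omega), Nat.choose_eq_zero_of_lt h, zero_mul]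
  · intro k hk hkb
    have hk' : k < b := by simp at hk; omega
    rw [Nat.choose_eq_zero_of_lt (by omega : 0 < b - k)]
    split <;> ring
  · intro h; exact absurd (self_mem_range_succ b) h

lemma Fs_zero_b (x y a : ℕ) : Fs x y a 0 = (x+a).choose 0 * (y+0).choose a := by
  unfold Fs; simp

lemma Fs_zero_a (x y b : ℕ) : Fs x y 0 b = (x+0).choose b * (y+b).choose 0 := by
  unfold Fs
  rw [Finset.sum_eq_single 0]
  · simp
  · intro k hk hk0
    rw [if_neg (by omega)]
  · intro h; exact absurd (Finset.mem_range.mpr (by omega)) h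


lemma Fs_rec (x y a b : ℕ) :
    Fs (x+1) y (a+1) (b+1)
      = Fs (x+1) y a b + (Fs x y (a+1) (b+1) + Fs x y (a+1) b) := by
  have pas : ∀ k : ℕ, (x+1+y+(k+1)).choose (k+1)
      = (x+1+y+k).choose k + (x+y+(k+1)).choose (k+1) := by
    intro k
    rw [show x+1+y+(k+1) = (x+1+y+k)+1 from by ring, Nat.choose_succ_succ' (x+1+y+k) k]
    congr 2
    omega
  have split2 : (∑ k ∈ range (b+1+1),
        if k ≤ a+1 then (x+y+k).choose k * (x+1).choose (b+1-k) * y.choose (a+1-k) else 0)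
      = Fs x y (a+1) (b+1) + Fs x y (a+1) b := by
    unfold Fs
    have hterm : ∀ k ∈ range (b+1+1),
        (if k ≤ a+1 then (x+y+k).choose k * (x+1).choose (b+1-k) * y.choose (a+1-k) else 0)
        = (if k ≤ a+1 then (x+y+k).choose k * x.choose (b+1-k) * y.choose (a+1-k) else 0)
          + (if k ≤ a+1 ∧ k ≤ b then (x+y+k).choose k * x.choose (b-k) * y.choose (a+1-k) else 0) := by
      intro k hk
      by_cases hka : k ≤ a+1
      · by_cases hkb : k ≤ b
        · rw [if_pos hka, if_pos hka, if_pos ⟨hka, hkb⟩,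
            show b+1-k = (b-k)+1 from by omega, Nat.choose_succ_succ' x (b-k)]
          ring
        · have hk1 : k = b+1 := by simp only [Finset.mem_range] at hk; omega
          rw [if_pos hka, if_pos hka, if_neg (fun h => hkb h.2), hk1]
          simp
      · rw [if_neg hka, if_neg hka, if_neg (fun h => hka h.1)]
    rw [Finset.sum_congr rfl hterm, Finset.sum_add_distrib]
    congr 1
    rw [Finset.sum_range_succ, if_neg (fun h => by omega : ¬(b+1 ≤ a+1 ∧ b+1 ≤ b)), add_zero]
    refine Finset.sum_congr rfl fun k hk => ?_
    simp only [Finset.mem_range] at hk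
    by_cases hka : k ≤ a+1
    · rw [if_pos ⟨hka, by omega⟩, if_pos hka]
    · rw [if_neg (fun h => hka h.1), if_neg hka]
  -- main
  rw [← split2,
    Finset.sum_range_succ' (fun k => if k ≤ a+1 then (x+y+k).choose k * (x+1).choose (b+1-k) * y.choose (a+1-k) else 0) (b+1)]
  unfold Fs
  rw [Finset.sum_range_succ' (fun k => if k ≤ a+1 then (x+1+y+k).choose k * (x+1).choose (b+1-k) * y.choose (a+1-k) else 0) (b+1)]
  have hmain : (∑ k ∈ range (b+1),
        if k+1 ≤ a+1 then (x+1+y+(k+1)).choose (k+1) * (x+1).choose (b+1-(k+1)) * y.choose (a+1-(k+1)) else 0)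
      = (∑ k ∈ range (b+1), if k ≤ a then (x+1+y+k).choose k * (x+1).choose (b-k) * y.choose (a-k) else 0)
        + ∑ k ∈ range (b+1),
            (if k+1 ≤ a+1 then (x+y+(k+1)).choose (k+1) * (x+1).choose (b+1-(k+1)) * y.choose (a+1-(k+1)) else 0) := by
    rw [← Finset.sum_add_distrib]
    refine Finset.sum_congr rfl fun k hk => ?_
    by_cases hka : k ≤ a
    · rw [if_pos (by omega : k+1 ≤ a+1), if_pos hka, if_pos (by omega : k+1 ≤ a+1),
        pas k, Nat.succ_sub_succ, Nat.succ_sub_succ]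
      ring
    · rw [if_neg (by omega : ¬ k+1 ≤ a+1), if_neg hka, if_neg (by omega : ¬ k+1 ≤ a+1)]
  rw [hmain]
  simp only [Nat.choose_zero_right, Nat.add_zero, Nat.sub_zero, if_pos (Nat.zero_le _)]
  ring

theorem Fs_eq : ∀ x y a b, Fs x y a b = (x+a).choose b * (y+b).choose a := by
  intro x
  induction x with
  | zero => intro y a b; rw [Fs_zero_x]; norm_num
  | succ x ih =>
    intro y a b
    induction b generalizing a with
    | zero => rw [Fs_zero_b]
    | succ b ihb =>
      cases a with
      | zero => rw [Fs_zero_a]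
      | succ a =>
        rw [Fs_rec, ih, ih, ihb a]
        have h3 : x+(a+1) = x+1+a := by ring
        have h1 : (y+(b+1)).choose (a+1) = (y+b).choose a + (y+b).choose (a+1) := by
          rw [show y+(b+1) = (y+b)+1 from rfl, Nat.choose_succ_succ']
        have h2 : (x+1+(a+1)).choose (b+1) = (x+1+a).choose b + (x+1+a).choose (b+1) := by
          rw [show x+1+(a+1) = (x+1+a)+1 from by ring, Nat.choose_succ_succ']
        rw [h3, h1, h2]
        ring


lemma lemB (n j : ℕ) (hj : j ≤ n) :
    ∑ k ∈ range (n+1), n.choose k * (n+k).choose k * ((k.choose j)^2 * (2*j).choose k)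
      = (n.choose j)^2 * ((n+j).choose j)^2 := by
  have hFs : Fs (n-j) j (2*j) n
      = ∑ k ∈ range (n+1), (if k ≤ 2*j then (n+k).choose k * (n-j).choose (n-k) * j.choose (2*j-k) else 0) := by
    unfold Fs
    rw [Nat.sub_add_cancel hj]
  have key : ∀ k ∈ range (n+1), n.choose k * (n+k).choose k * ((k.choose j)^2 * (2*j).choose k)
      = n.choose j * (2*j).choose j *
          (if k ≤ 2*j then (n+k).choose k * (n-j).choose (n-k) * j.choose (2*j-k) else 0) := by
    intro k hk
    simp only [Finset.mem_range] at hk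
    have hkn : k ≤ n := by omega
    by_cases h1 : k < j
    · rw [if_pos (by omega : k ≤ 2*j), Nat.choose_eq_zero_of_lt h1,
        Nat.choose_eq_zero_of_lt (show j < 2*j - k by omega)]
      ring
    · by_cases h2 : 2*j < k
      · rw [if_neg (by omega), Nat.choose_eq_zero_of_lt h2]
        ring
      · have hjk : j ≤ k := by omega
        have hk2j : k ≤ 2*j := by omega
        have e1 : n.choose k * k.choose j = n.choose j * (n-j).choose (k-j) :=
          Nat.choose_mul hjk
        have e1' : (n-j).choose (n-k) = (n-j).choose (k-j) := by
          rw [show n-k = (n-j)-(k-j) from by omega]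
          exact Nat.choose_symm (by omega)
        have e2 : (2*j).choose k * k.choose j = (2*j).choose j * j.choose (k-j) := by
          have := Nat.choose_mul (n := 2*j) hjk
          rwa [show 2*j - j = j from by omega] at this
        have e2' : j.choose (2*j-k) = j.choose (k-j) := by
          rw [show 2*j-k = j-(k-j) from by omega]
          exact Nat.choose_symm (by omega)
        rw [if_pos hk2j, e1', e2', pow_two]
        calc n.choose k * (n+k).choose k * (k.choose j * k.choose j * (2*j).choose k)
            = (n.choose k * k.choose j) * ((2*j).choose k * k.choose j) * (n+k).choose k := by
              ring
          _ = (n.choose j * (n-j).choose (k-j)) * ((2*j).choose j * j.choose (k-j)) * (n+k).choose k := by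
              rw [e1, e2]
          _ = _ := by ring
  rw [Finset.sum_congr rfl key, ← Finset.mul_sum, ← hFs, Fs_eq,
    show n-j+2*j = n+j from by omega, show j+n = n+j from by ring,
    Nat.choose_symm_add]
  have e4 : (n+j).choose (2*j) * (2*j).choose j = (n+j).choose j * n.choose j := by
    have := Nat.choose_mul (n := n+j) (show j ≤ 2*j by omega)
    rwa [show n+j-j = n from by omega, show 2*j-j = j from by omega] at this
  calc n.choose j * (2*j).choose j * ((n+j).choose j * (n+j).choose (2*j))
      = ((n+j).choose (2*j) * (2*j).choose j) * (n.choose j * (n+j).choose j) := by ring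
    _ = ((n+j).choose j * n.choose j) * (n.choose j * (n+j).choose j) := by rw [e4]
    _ = _ := by ring

theorem apery_franel (n : ℕ) :
    ∑ k ∈ Finset.range (n + 1), (n.choose k) ^ 2 * ((n + k).choose k) ^ 2 =
      ∑ k ∈ Finset.range (n + 1),
        n.choose k * (n + k).choose k *
          ∑ j ∈ Finset.range (k + 1), (k.choose j) ^ 3 := by
  symm
  calc ∑ k ∈ Finset.range (n + 1), n.choose k * (n + k).choose k *
          ∑ j ∈ Finset.range (k + 1), (k.choose j) ^ 3
      = ∑ k ∈ range (n+1), n.choose k * (n+k).choose k *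
          ∑ j ∈ range (n+1), (k.choose j)^2 * (2*j).choose k := by
        refine Finset.sum_congr rfl fun k hk => ?_
        simp only [Finset.mem_range] at hk
        rw [← lemA k]
        congr 1
        refine Finset.sum_subset (Finset.range_subset_range.mpr (by omega)) fun j _ hj => ?_
        simp only [Finset.mem_range, not_lt] at hj
        rw [Nat.choose_eq_zero_of_lt (by omega : k < j)]
        ring
    _ = ∑ k ∈ range (n+1), ∑ j ∈ range (n+1),
          n.choose k * (n+k).choose k * ((k.choose j)^2 * (2*j).choose k) := by
        refine Finset.sum_congr rfl fun k _ => ?_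
        rw [Finset.mul_sum]
    _ = ∑ j ∈ range (n+1), ∑ k ∈ range (n+1),
          n.choose k * (n+k).choose k * ((k.choose j)^2 * (2*j).choose k) := Finset.sum_comm
    _ = ∑ j ∈ range (n+1), (n.choose j)^2 * ((n+j).choose j)^2 := by
        refine Finset.sum_congr rfl fun j hj => ?_
        exact lemB n j (by simp at hj; omega)
end

section
/- For all n ≥ 0: sum over k of C(n,k)^3 * C(n+k,k)^3 = sum over k of C(n,k)*C(n+k,k)*c(k), where c(k) = sum over j of C(k,j)^2 * C(2j,j)^2 * C(2j,k-j). (Strehl's explicit formula for c^(3)_n.) -/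
open Finset

private lemma hc1 (n s : ℕ) : (n.choose (s+1) : ℤ) * ((s:ℤ)+1) = (n.choose s : ℤ) * ((n:ℤ) - s) := by
  rcases le_or_gt s n with h | h
  · have h0 := Nat.choose_succ_right_eq n s
    have h1 : ((n.choose (s+1) * (s+1) : ℕ) : ℤ) = ((n.choose s * (n-s) : ℕ) : ℤ) := by
      exact_mod_cast congrArg (fun x : ℕ => (x : ℤ)) h0
    push_cast [Nat.cast_sub h] at h1
    linear_combination h1
  · rw [Nat.choose_eq_zero_of_lt h, Nat.choose_eq_zero_of_lt (h.trans (Nat.lt_succ_self s))]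
    simp

private lemma hc2 (a b : ℕ) : ((a+1).choose b : ℤ) * ((a:ℤ)+1-b) = (a.choose b : ℤ) * ((a:ℤ)+1) := by
  have h1 := hc1 (a+1) b
  have h2 : (((a:ℤ)+1)) * (a.choose b : ℤ) = ((a+1).choose (b+1) : ℤ) * ((b:ℤ)+1) := by
    exact_mod_cast Nat.add_one_mul_choose_eq a b
  push_cast at h1
  linear_combination - h1 - h2

private def Fz (k n m : ℕ) : ℤ :=
  (n.choose m : ℤ) * ((n+m).choose m : ℤ) * ((m.choose k : ℤ)^2 * ((2*k).choose (m-k) : ℤ))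

private def Vz (k n m : ℕ) : ℤ :=
  -2*((n:ℤ)+1)*((m:ℤ)-(k:ℤ))^2 * (n.choose (m-1) : ℤ) * ((n+m).choose m : ℤ) *
    (m.choose k : ℤ) * ((m-1).choose k : ℤ) * ((2*k).choose (m-k) : ℤ)

private lemma cert (K n m : ℕ) :
    ((n:ℤ)+1-((K:ℤ)+1))^3 * Fz (K+1) (n+1) m - ((n:ℤ)+1+((K:ℤ)+1))^3 * Fz (K+1) n m
      = Vz (K+1) n (m+1) - Vz (K+1) n m := by
  rcases lt_or_ge m (K+1) with hm | hm
  · have h1 : m.choose (K+1) = 0 := Nat.choose_eq_zero_of_lt hm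
    have h2 : (m-1).choose (K+1) = 0 :=
      Nat.choose_eq_zero_of_lt (lt_of_le_of_lt (Nat.pred_le m) hm)
    simp only [Fz, Vz, Nat.add_sub_cancel, h1, h2]
    push_cast
    ring
  · obtain ⟨i, rfl⟩ : ∃ i, m = K + 1 + i := ⟨m - (K+1), by omega⟩
    simp only [Fz, Vz]
    rw [show K + 1 + i - (K+1) = i from by omega,
        show K + 1 + i - 1 = K + i from by omega,
        show K + 1 + i + 1 - 1 = K + 1 + i from by omega,
        show K + 1 + i + 1 - (K+1) = i + 1 from by omega]
    set A1 : ℤ := (n.choose (K+1+i) : ℤ) with hA1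
    set A2 : ℤ := ((n+1).choose (K+1+i) : ℤ) with hA2
    set A3 : ℤ := (n.choose (K+i) : ℤ) with hA3
    set B1 : ℤ := ((n+(K+1+i)).choose (K+1+i) : ℤ) with hB1
    set B2 : ℤ := ((n+1+(K+1+i)).choose (K+1+i) : ℤ) with hB2
    set B3 : ℤ := ((n+(K+1+i+1)).choose (K+1+i+1) : ℤ) with hB3
    set P1 : ℤ := ((K+1+i).choose (K+1) : ℤ) with hP1
    set P2 : ℤ := ((K+i).choose (K+1) : ℤ) with hP2
    set P3 : ℤ := ((K+1+i+1).choose (K+1) : ℤ) with hP3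
    set Q1 : ℤ := ((2*(K+1)).choose i : ℤ) with hQ1
    set Q2 : ℤ := ((2*(K+1)).choose (i+1) : ℤ) with hQ2
    have r1 : A2 * ((K:ℤ)+1+i) = A3 * ((n:ℤ)+1) := by
      rw [hA2, hA3, show K+1+i = K+i+1 from by omega]
      have h : (((n:ℤ)+1)) * (n.choose (K+i) : ℤ) = ((n+1).choose (K+i+1) : ℤ) * ((K:ℤ)+(i:ℤ)+1) := by
        exact_mod_cast Nat.add_one_mul_choose_eq n (K+i)
      linear_combination -h
    have r2 : A1 * ((K:ℤ)+1+i) = A3 * ((n:ℤ) - ((K:ℤ)+i)) := by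
      rw [hA1, hA3, show K+1+i = K+i+1 from by omega]
      have h := hc1 n (K+i)
      push_cast at h
      linear_combination h
    have r3 : B2 * ((n:ℤ)+1) = B1 * ((n:ℤ)+(K:ℤ)+i+2) := by
      rw [hB2, hB1, show n+1+(K+1+i) = n+(K+1+i)+1 from by omega]
      have h := hc2 (n+(K+1+i)) (K+1+i)
      push_cast at h
      linear_combination h
    have r4 : B3 * ((K:ℤ)+1+i+1) = B2 * ((n:ℤ)+1) := by
      rw [hB3, hB2, show n+1+(K+1+i) = n+(K+1+i+1) from by omega]
      have h := hc1 (n+(K+1+i+1)) (K+1+i)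
      push_cast at h
      linear_combination h
    have r5 : P3 * ((i:ℤ)+1) = P1 * ((K:ℤ)+1+i+1) := by
      rw [hP3, hP1]
      have h := hc2 (K+1+i) (K+1)
      push_cast at h
      linear_combination h
    have r6 : P1 * (i:ℤ) = P2 * ((K:ℤ)+1+i) := by
      rw [hP1, hP2, show K+1+i = K+i+1 from by omega]
      have h := hc2 (K+i) (K+1)
      push_cast at h
      linear_combination h
    have r7 : Q2 * ((i:ℤ)+1) = Q1 * (2*(K:ℤ)+2-(i:ℤ)) := by
      rw [hQ2, hQ1]
      have h := hc1 (2*(K+1)) i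
      push_cast at h
      linear_combination h
    apply mul_right_cancel₀ (b := ((K:ℤ)+1+i) * ((n:ℤ)+1)) (by positivity)
    push_cast
    linear_combination
      (((n:ℤ)-K)^3*P1^2*Q1*B2*((n:ℤ)+1)) * r1
      + (-((((n:ℤ)+K+2)^3)*P1^2*Q1*B1*((n:ℤ)+1)) + 2*((n:ℤ)+1)^2*P1*((i:ℤ)+1)^2*B3*P3*Q2) * r2
      + ((((n:ℤ)-K)^3)*P1^2*Q1*A3*((n:ℤ)+1) + 2*((n:ℤ)+1)^2*P1^2*A3*((n:ℤ)-K-i)*(2*(K:ℤ)+2-i)*Q1) * r3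
      + (2*((n:ℤ)+1)^2*P1^2*A3*((n:ℤ)-K-i)*(2*(K:ℤ)+2-i)*Q1) * r4
      + (2*((n:ℤ)+1)^2*P1*A3*((n:ℤ)-K-i)*((i:ℤ)+1)*B3*Q2) * r5
      + (2*((n:ℤ)+1)^2*(i:ℤ)^2*A3*B1*P1*Q1) * r6
      + (2*((n:ℤ)+1)^2*P1^2*((K:ℤ)+i+2)*A3*((n:ℤ)-K-i)*B3) * r7

private lemma claim1 (K n : ℕ) :
    ((n:ℤ)+1-((K:ℤ)+1))^3 * (∑ m ∈ range (n+2), Fz (K+1) (n+1) m)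
      = ((n:ℤ)+1+((K:ℤ)+1))^3 * (∑ m ∈ range (n+1), Fz (K+1) n m) := by
  have hext : ∑ m ∈ range (n+1), Fz (K+1) n m = ∑ m ∈ range (n+2), Fz (K+1) n m := by
    rw [Finset.sum_range_succ (f := fun m => Fz (K+1) n m) (n+1)]
    have h0 : Fz (K+1) n (n+1) = 0 := by
      simp [Fz, Nat.choose_succ_self]
    rw [h0, add_zero]
  rw [hext, ← sub_eq_zero, Finset.mul_sum, Finset.mul_sum, ← Finset.sum_sub_distrib]
  have hcong : ∀ m ∈ range (n+2),
      ((n:ℤ)+1-((K:ℤ)+1))^3 * Fz (K+1) (n+1) m - ((n:ℤ)+1+((K:ℤ)+1))^3 * Fz (K+1) n m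
        = Vz (K+1) n (m+1) - Vz (K+1) n m := fun m _ => cert K n m
  rw [Finset.sum_congr rfl hcong, Finset.sum_range_sub (Vz (K+1) n)]
  have h1 : Vz (K+1) n (n+2) = 0 := by
    have : n.choose (n+2-1) = 0 := by
      rw [show n+2-1 = n+1 from by omega]; exact Nat.choose_succ_self n
    simp [Vz, this]
  have h2 : Vz (K+1) n 0 = 0 := by simp [Vz]
  rw [h1, h2]; ring

private lemma Sval (K : ℕ) : ∀ n, (∑ m ∈ range (n+1), Fz (K+1) n m)
    = ((2*(K+1)).choose (K+1) : ℤ) * (((n+(K+1)).choose (2*(K+1)) : ℤ))^3 := by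
  intro n
  induction n with
  | zero =>
      have h1 : (0:ℕ).choose (K+1) = 0 := by simp
      have h2 : (0+(K+1)).choose (2*(K+1)) = 0 := Nat.choose_eq_zero_of_lt (by omega)
      rw [h2]
      simp [Fz, h1]
  | succ t ih =>
      rcases lt_trichotomy (t+1) (K+1) with h | h | h
      · have hz : ∀ m ∈ range (t+2), Fz (K+1) (t+1) m = 0 := by
          intro m hm
          rw [Finset.mem_range] at hm
          have : m < K+1 := by omega
          simp [Fz, Nat.choose_eq_zero_of_lt this]
        rw [Finset.sum_eq_zero hz]
        have h2 : (t+1+(K+1)).choose (2*(K+1)) = 0 := Nat.choose_eq_zero_of_lt (by omega)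
        rw [h2]; ring
      · obtain rfl : t = K := by omega
        rw [Finset.sum_eq_single (t+1)]
        · have e1 : t+1+(t+1) = 2*(t+1) := by ring
          have e2 : (t+1) - (t+1) = 0 := by omega
          simp [Fz, e1, e2, Nat.choose_self]
        · intro m hm hne
          rw [Finset.mem_range] at hm
          rcases lt_or_ge m (t+1) with hlt | hge
          · simp [Fz, Nat.choose_eq_zero_of_lt hlt]
          · omega
        · intro hmem
          exact absurd (Finset.mem_range.mpr (by omega)) hmem
      · have hc := claim1 K t
        rw [ih] at hc
        have hg := hc2 (t+(K+1)) (2*(K+1))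
        have hne : ((t:ℤ)+1-((K:ℤ)+1)) ≠ 0 := by
          have : (K:ℤ)+1 < (t:ℤ)+1 := by exact_mod_cast h
          intro hcon; omega
        apply mul_left_cancel₀ (pow_ne_zero 3 hne)
        rw [hc]
        have hgz : ((t+(K+1)+1).choose (2*(K+1)) : ℤ) * ((t:ℤ)-(K:ℤ))
            = ((t+(K+1)).choose (2*(K+1)) : ℤ) * ((t:ℤ)+(K:ℤ)+2) := by
          push_cast at hg
          linear_combination hg
        rw [show t+1+(K+1) = t+(K+1)+1 from by omega]
        set X : ℤ := ((t+(K+1)+1).choose (2*(K+1)) : ℤ)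
        set Y : ℤ := ((t+(K+1)).choose (2*(K+1)) : ℤ)
        linear_combination (-((2*(K+1)).choose (K+1) : ℤ)) *
          (X^2*((t:ℤ)-K)^2 + X*((t:ℤ)-K)*Y*((t:ℤ)+K+2) + Y^2*((t:ℤ)+K+2)^2) * hgz

private lemma keyN (n k : ℕ) :
    ((2*k).choose k)^2 *
      ∑ m ∈ range (n+1), n.choose m * ((n+m).choose m) *
        ((m.choose k)^2 * ((2*k).choose (m-k)))
      = (n.choose k)^3 * ((n+k).choose k)^3 := by
  cases k with
  | zero =>
      rw [Finset.sum_eq_single 0]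
      · simp
      · intro m hm hne
        have : (0:ℕ) < m := Nat.pos_of_ne_zero hne
        simp [Nat.choose_eq_zero_of_lt this]
      · intro hmem
        exact absurd (Finset.mem_range.mpr (by omega)) hmem
  | succ K =>
      have hprod : n.choose (K+1) * ((n+(K+1)).choose (K+1))
          = (2*(K+1)).choose (K+1) * ((n+(K+1)).choose (2*(K+1))) := by
        rcases le_or_gt (K+1) n with h | h
        · have hm := Nat.choose_mul (n := n+(K+1)) (k := 2*(K+1)) (s := K+1)
            (by omega)
          rw [show n+(K+1)-(K+1) = n from by omega,
              show 2*(K+1)-(K+1) = K+1 from by omega] at hm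
          calc n.choose (K+1) * ((n+(K+1)).choose (K+1))
              = (n+(K+1)).choose (K+1) * ((n).choose (K+1)) := by ring
            _ = (2*(K+1)).choose (K+1) * ((n+(K+1)).choose (2*(K+1))) := by
                rw [← hm]; ring
        · have h1 : n.choose (K+1) = 0 := Nat.choose_eq_zero_of_lt h
          have h2 : (n+(K+1)).choose (2*(K+1)) = 0 := Nat.choose_eq_zero_of_lt (by omega)
          rw [h1, h2]; ring
      have hS := Sval K n
      have hcast : ((∑ m ∈ range (n+1), n.choose m * ((n+m).choose m) *
            ((m.choose (K+1))^2 * ((2*(K+1)).choose (m-(K+1)))) : ℕ) : ℤ)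
          = ∑ m ∈ range (n+1), Fz (K+1) n m := by
        push_cast [Fz]
        rfl
      have hZ : (((2*(K+1)).choose (K+1) : ℤ))^2 * ∑ m ∈ range (n+1), Fz (K+1) n m
          = ((n.choose (K+1) : ℤ))^3 * (((n+(K+1)).choose (K+1) : ℤ))^3 := by
        rw [hS]
        have hpz : (n.choose (K+1) : ℤ) * (((n+(K+1)).choose (K+1) : ℤ))
            = ((2*(K+1)).choose (K+1) : ℤ) * (((n+(K+1)).choose (2*(K+1)) : ℤ)) := by
          exact_mod_cast hprod
        set A : ℤ := (n.choose (K+1) : ℤ)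
        set B : ℤ := ((n+(K+1)).choose (K+1) : ℤ)
        set C2 : ℤ := ((2*(K+1)).choose (K+1) : ℤ)
        set X : ℤ := ((n+(K+1)).choose (2*(K+1)) : ℤ)
        linear_combination (-((A*B)^2 + (A*B)*(C2*X) + (C2*X)^2)) * hpz
      rw [← hcast] at hZ
      exact_mod_cast hZ

theorem strehl_r_three (n : ℕ) :
    ∑ k ∈ Finset.range (n + 1), (n.choose k) ^ 3 * ((n + k).choose k) ^ 3 =
      ∑ k ∈ Finset.range (n + 1),
        n.choose k * (n + k).choose k *
          ∑ j ∈ Finset.range (k + 1),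
            (k.choose j) ^ 2 * ((2 * j).choose j) ^ 2 * (2 * j).choose (k - j) := by
  have hR : ∀ k ∈ range (n+1),
      n.choose k * ((n+k).choose k) *
          ∑ j ∈ range (k+1), (k.choose j)^2 * ((2*j).choose j)^2 * ((2*j).choose (k-j))
        = ∑ j ∈ range (n+1), n.choose k * ((n+k).choose k) *
            ((k.choose j)^2 * ((2*j).choose j)^2 * ((2*j).choose (k-j))) := by
    intro k hk
    rw [Finset.mem_range] at hk
    rw [← Finset.mul_sum]
    congr 1
    apply Finset.sum_subset
    · exact Finset.range_subset_range.mpr (by omega)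
    · intro j hj hnj
      rw [Finset.mem_range] at hj
      rw [Finset.mem_range] at hnj
      have : k < j := by omega
      simp [Nat.choose_eq_zero_of_lt this]
  rw [Finset.sum_congr rfl hR, Finset.sum_comm]
  have hL : ∀ k ∈ range (n+1), (n.choose k)^3 * ((n+k).choose k)^3
      = ∑ m ∈ range (n+1), ((2*k).choose k)^2 * (n.choose m * ((n+m).choose m) *
          ((m.choose k)^2 * ((2*k).choose (m-k)))) := by
    intro k _
    rw [← Finset.mul_sum, keyN n k]
  rw [Finset.sum_congr rfl hL]
  apply Finset.sum_congr rfl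
  intro k _
  apply Finset.sum_congr rfl
  intro m _
  ring
end
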